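/- arXiv:2212.05520 — 6 statements merged into one kernel-verified Lean document; each statement's English description precedes it below -/
import Mathlib

section
/- Every Luzin family is an L-family: if 𝒜 is a Luzin family, then every set ℙ ⊆ ℙ_𝒜 of pairwise essentially distinct conditions can be written as a countable union ℙ = ⋃_{n∈ℕ} ℙ_n where each ℙ_n consists of pairwise incompatible conditions. -/
open Set Filter Cardinal

noncomputable section

/-- The Banach space `ℓ∞` of bounded real sequences with the sup norm. -/
abbrev Linfty : Type := lp (fun _ : ℕ => ℝ) ⊤

/-- An a.d.-family: an uncountable family of infinite subsets of `ℕ` which is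
pairwise almost disjoint. -/
def ADFamily (𝒜 : Set (Set ℕ)) : Prop :=
  ¬𝒜.Countable ∧ (∀ A ∈ 𝒜, A.Infinite) ∧
    ∀ A ∈ 𝒜, ∀ B ∈ 𝒜, A ≠ B → (A ∩ B).Finite

/-- A maximal a.d.-family. -/
def MaximalADFamily (𝒜 : Set (Set ℕ)) : Prop :=
  ADFamily 𝒜 ∧ ∀ X : Set ℕ, X.Infinite → ∃ A ∈ 𝒜, (X ∩ A).Infinite

/-- `A =* B` : the symmetric difference is finite. -/
def eqStar (A B : Set ℕ) : Prop := (symmDiff A B).Finite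

/-- Finite subfamilies `a`, `b` of `𝒜` represent the pair `p`. -/
def Represents (𝒜 : Set (Set ℕ)) (p : Set ℕ × Set ℕ) (a b : Finset (Set ℕ)) : Prop :=
  ↑a ⊆ 𝒜 ∧ ↑b ⊆ 𝒜 ∧ eqStar p.1 (⋃ A ∈ a, A) ∧ eqStar p.2 (⋃ B ∈ b, B)

/-- `p` is a condition of the splitting partial order `ℙ_𝒜`. -/
def SplitCond (𝒜 : Set (Set ℕ)) (p : Set ℕ × Set ℕ) : Prop :=
  p.1 ∩ p.2 = ∅ ∧ ∃ a b : Finset (Set ℕ), Represents 𝒜 p a b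

/-- `Extends p q` means `p ≤ q` in `ℙ_𝒜`. -/
def Extends (p q : Set ℕ × Set ℕ) : Prop := q.1 ⊆ p.1 ∧ q.2 ⊆ p.2

/-- Compatibility in `ℙ_𝒜`. -/
def Compat (𝒜 : Set (Set ℕ)) (p q : Set ℕ × Set ℕ) : Prop :=
  ∃ r, SplitCond 𝒜 r ∧ Extends r p ∧ Extends r q

/-- An antichain of `ℙ_𝒜`: a set of pairwise incompatible conditions. -/
def SplitAntichain (𝒜 : Set (Set ℕ)) (P : Set (Set ℕ × Set ℕ)) : Prop :=
  (∀ p ∈ P, SplitCond 𝒜 p) ∧ ∀ p ∈ P, ∀ q ∈ P, p ≠ q → ¬Compat 𝒜 p q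

/-- `ℙ_𝒜` satisfies the countable chain condition. -/
def SplitCCC (𝒜 : Set (Set ℕ)) : Prop :=
  ∀ P : Set (Set ℕ × Set ℕ), SplitAntichain 𝒜 P → P.Countable

/-- A centered subset of `ℙ_𝒜`: every finite subset has a common lower bound in `ℙ_𝒜`. -/
def SplitCentered (𝒜 : Set (Set ℕ)) (P : Set (Set ℕ × Set ℕ)) : Prop :=
  ∀ F : Finset (Set ℕ × Set ℕ), ↑F ⊆ P →
    ∃ r, SplitCond 𝒜 r ∧ ∀ p ∈ F, Extends r p

/-- `ℙ_𝒜` is σ-centered. -/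
def SplitSigmaCentered (𝒜 : Set (Set ℕ)) : Prop :=
  ∃ P : ℕ → Set (Set ℕ × Set ℕ),
    (⋃ n, P n) = {p | SplitCond 𝒜 p} ∧ ∀ n, SplitCentered 𝒜 (P n)

/-- `ℙ_𝒜` has precaliber `κ`. -/
def SplitPrecaliber (𝒜 : Set (Set ℕ)) (κ : Cardinal) : Prop :=
  ∀ P : Set (Set ℕ × Set ℕ), (∀ p ∈ P, SplitCond 𝒜 p) → #P = κ →
    ∃ Q ⊆ P, #Q = κ ∧ SplitCentered 𝒜 Q

/-- Two conditions are essentially distinct if their (uniquely determined)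
representing finite subfamilies differ on both coordinates. -/
def EssDistinct (𝒜 : Set (Set ℕ)) (p q : Set ℕ × Set ℕ) : Prop :=
  ∀ ap bp aq bq : Finset (Set ℕ), Represents 𝒜 p ap bp → Represents 𝒜 q aq bq →
    ap ≠ aq ∧ bp ≠ bq

/-- An antiramsey a.d.-family. -/
def Antiramsey (𝒜 : Set (Set ℕ)) : Prop :=
  ADFamily 𝒜 ∧
  ∀ P : Set (Set ℕ × Set ℕ), (∀ p ∈ P, SplitCond 𝒜 p) → ¬P.Countable →
    (∀ p ∈ P, ∀ q ∈ P, p ≠ q → EssDistinct 𝒜 p q) →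
    (∃ p ∈ P, ∃ q ∈ P, p ≠ q ∧ Compat 𝒜 p q) ∧ (∃ p ∈ P, ∃ q ∈ P, ¬Compat 𝒜 p q)

/-- The first uncountable ordinal. -/
def omega1 : Ordinal.{0} := (Cardinal.aleph 1).ord

/-- A Luzin family. -/
def IsLuzinFamily (𝒜 : Set (Set ℕ)) : Prop :=
  ADFamily 𝒜 ∧ ∃ A : Ordinal.{0} → Set ℕ,
    (∀ ξ < omega1, A ξ ∈ 𝒜) ∧
    (∀ B ∈ 𝒜, ∃ ξ < omega1, A ξ = B) ∧
    (∀ ξ < omega1, ∀ η < omega1, ξ ≠ η → A ξ ≠ A η) ∧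
    ∀ η < omega1, ∀ m : ℕ, {ξ : Ordinal | ξ < η ∧ sSup (A ξ ∩ A η) = m}.Finite

/-- `(B i : i < n)` forms an `n`-Luzin gap. -/
def IsNLuzinGap (n : ℕ) (B : Fin n → Ordinal.{0} → Set ℕ) : Prop :=
  (∀ i : Fin n, ∀ α < omega1, ∀ β < omega1, α ≠ β → B i α ≠ B i β) ∧
  (∀ i j : Fin n, i ≠ j → ∀ α < omega1, ∀ β < omega1, B i α ≠ B j β) ∧
  ∃ m : ℕ,
    (∀ i j : Fin n, i < j → ∀ α < omega1, B i α ∩ B j α ⊆ Set.Iio m) ∧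
    (∀ α < omega1, ∀ β < omega1, α ≠ β →
      ¬(⋃ (i : Fin n) (j : Fin n) (_ : i ≠ j), B i α ∩ B j β) ⊆ Set.Iio m)

/-- `𝒜` contains an `n`-Luzin gap. -/
def ContainsNLuzinGap (𝒜 : Set (Set ℕ)) (n : ℕ) : Prop :=
  ∃ B : Fin n → Ordinal.{0} → Set ℕ,
    (∀ i : Fin n, ∀ α < omega1, B i α ∈ 𝒜) ∧ IsNLuzinGap n B

-- The characteristic function of `A ⊆ ℕ` as an element of `ℓ∞`.
open Classical in
def indicatorLinfty (A : Set ℕ) : Linfty :=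
  ⟨fun n => if n ∈ A then (1 : ℝ) else 0, by
    apply memℓp_infty
    refine ⟨1, ?_⟩
    rintro x ⟨n, rfl⟩
    dsimp only
    split <;> simp⟩

/-- The subset `c₀` of `ℓ∞`. -/
def c0Set : Set Linfty := {f | Tendsto (fun n => f n) atTop (nhds 0)}

/-- The Johnson–Lindenstrauss space `X_𝒜`: the closed linear span of
`c₀ ∪ {1_A : A ∈ 𝒜}` in `ℓ∞`, as a (closed) submodule. -/
def XA (𝒜 : Set (Set ℕ)) : Submodule ℝ Linfty :=
  (Submodule.span ℝ (c0Set ∪ indicatorLinfty '' 𝒜)).topologicalClosure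

/-- The norm `‖·‖_{∞,2}` on `ℓ∞`. -/
def norm12 (f : Linfty) : ℝ :=
  ‖f‖ + Real.sqrt (∑' n : ℕ, (f n) ^ 2 / 2 ^ (n + 1))

/-- The unit sphere of `(X_𝒜, ‖·‖∞)`. -/
def sphereInf (𝒜 : Set (Set ℕ)) : Set Linfty :=
  {f : Linfty | f ∈ XA 𝒜 ∧ ‖f‖ = 1}

/-- The unit sphere of `(X_𝒜, ‖·‖_{∞,2})`. -/
def sphere12 (𝒜 : Set (Set ℕ)) : Set Linfty :=
  {f : Linfty | f ∈ XA 𝒜 ∧ norm12 f = 1}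

/-- The Open Coloring Axiom. -/
def OCA : Prop :=
  ∀ (X : Type) [MetricSpace X], TopologicalSpace.SeparableSpace X →
    ∀ K : Set (X × X), IsOpen K → (∀ x y : X, (x, y) ∈ K → (y, x) ∈ K) →
      (∃ Y : Set X, ¬Y.Countable ∧ ∀ x ∈ Y, ∀ y ∈ Y, x ≠ y → (x, y) ∈ K) ∨
      (∃ C : ℕ → Set X, (⋃ n, C n) = Set.univ ∧
        ∀ n, ∀ x ∈ C n, ∀ y ∈ C n, x ≠ y → (x, y) ∉ K)

/-- An `ℝ`-embeddable a.d.-family. -/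
def REmbeddable (𝒜 : Set (Set ℕ)) : Prop :=
  ∃ (f : ℕ → ℚ) (r : Set ℕ → ℝ), Function.Injective f ∧
    (∀ A ∈ 𝒜, Irrational (r A) ∧
      ∀ ε : ℝ, 0 < ε → {n ∈ A | ε ≤ |(f n : ℝ) - r A|}.Finite) ∧
    (∀ A ∈ 𝒜, ∀ B ∈ 𝒜, A ≠ B → r A ≠ r B)

/-- The Continuum Hypothesis. -/
def CH : Prop := (Cardinal.continuum : Cardinal.{0}) = Cardinal.aleph 1

end

/-!
Rank the members of `𝒜` by their Luzin index `ι`: below any bound `k`, a member `B` meets only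
finitely many members of rank at most `ι B`. For `p ∈ P` fix its representation `(a p, b p)`, a
bound `n p` above which the members of `a p` lie in `p.1` and those of `b p` in `p.2`, and the
largest rank `ρ p` of a member of `a p ∪ b p`, attained by `B`, say `B ∈ a p`. If `q` is compatible
with `p`, `n q = n p` and `ρ q ≤ ρ p`, then `p.1 ∩ q.2 = ∅` forces every member of `b q` to meet
`B` below `n p`, so `b q` is a subset of a fixed finite set, and essential distinctness leaves only
finitely many such `q`. So within each class `n p = n` every condition is compatible with only
finitely many conditions of no larger rank, and a greedy colouring along a well-order refining `ρ`
splits the class into countably many antichains.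
-/

section Coloring

variable {X : Type*} {r : X → X → Prop}

theorem exists_nat_coloring_of_isWellOrder (lt : X → X → Prop) [IsWellOrder X lt]
    (hr : ∀ x y, r x y → r y x) (hfin : ∀ x, {y | lt y x ∧ r x y}.Finite) :
    ∃ c : X → ℕ, ∀ x y, x ≠ y → r x y → c x ≠ c y := by
  classical
  let c : X → ℕ :=
    IsWellFounded.fix lt fun x rec => sInf {k | ∀ y (h : lt y x), r x y → rec y h ≠ k}
  have hc : ∀ x y, lt y x → r x y → c y ≠ c x := by
    intro x
    have hfree : {k | ∀ y, lt y x → r x y → c y ≠ k}.Nonempty := by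
      obtain ⟨k, hk⟩ := ((hfin x).image c).infinite_compl.nonempty
      exact ⟨k, fun y hlt hxy hyk => hk ⟨y, ⟨hlt, hxy⟩, hyk⟩⟩
    have hcx : c x = sInf {k | ∀ y, lt y x → r x y → c y ≠ k} := IsWellFounded.fix_eq _ _ x
    exact hcx ▸ Nat.sInf_mem hfree
  refine ⟨c, fun x y hne hxy => ?_⟩
  rcases trichotomous_of lt x y with hlt | heq | hlt
  · exact hc y x hlt (hr x y hxy)
  · exact absurd heq hne
  · exact (hc x y hlt hxy).symm

theorem exists_nat_coloring_of_rank {β : Type*} [LinearOrder β] [WellFoundedLT β]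
    (hr : ∀ x y, r x y → r y x) (ρ : X → β) (hfin : ∀ x, {y | y ≠ x ∧ r x y ∧ ρ y ≤ ρ x}.Finite) :
    ∃ c : X → ℕ, ∀ x y, x ≠ y → r x y → c x ≠ c y := by
  let f : X ↪ β × X := ⟨fun x => (ρ x, x), fun x y h => congrArg Prod.snd h⟩
  let lt := f ⁻¹'o Prod.Lex (· < ·) WellOrderingRel
  have : IsWellOrder X lt := (RelEmbedding.preimage f _).isWellOrder
  refine exists_nat_coloring_of_isWellOrder lt hr fun x => (hfin x).subset ?_
  rintro y ⟨hlt, hxy⟩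
  refine ⟨fun h => irrefl_of lt x (h ▸ hlt), hxy, ?_⟩
  rcases Prod.lex_def.1 hlt with h | ⟨h, -⟩
  exacts [h.le, h.le]

theorem exists_iUnion_eq_of_nat_coloring {P : Set X} (c : X → ℕ)
    (hc : ∀ p ∈ P, ∀ q ∈ P, p ≠ q → r p q → c p ≠ c q) :
    ∃ Pn : ℕ → Set X, P = ⋃ n, Pn n ∧ ∀ n, ∀ p ∈ Pn n, ∀ q ∈ Pn n, p ≠ q → ¬r p q :=
  ⟨fun n => {p ∈ P | c p = n}, by ext p; simp,
    fun _ p ⟨hp, hpn⟩ q ⟨hq, hqn⟩ hne hpq => hc p hp q hq hne hpq (hpn.trans hqn.symm)⟩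

end Coloring

theorem finite_setOf_coe_subset {α β : Type*} {P : Set α} {t : α → Finset β} (ht : InjOn t P)
    {W : Set β} (hW : W.Finite) : {p | p ∈ P ∧ ↑(t p) ⊆ W}.Finite := by
  refine Set.Finite.of_finite_image ?_ (ht.mono fun _ hp => hp.1)
  refine (hW.finite_subsets.preimage Finset.coe_injective.injOn).subset ?_
  rintro _ ⟨p, ⟨-, hp⟩, rfl⟩
  exact hp

theorem finite_setOf_inter_subset_Iio_of_sSup {γ : Type*} [LT γ] {A : γ → Set ℕ} {η : γ}
    (hA : ∀ m : ℕ, {ξ | ξ < η ∧ sSup (A ξ ∩ A η) = m}.Finite) (k : ℕ) :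
    {ξ | ξ < η ∧ A ξ ∩ A η ⊆ Iio k}.Finite := by
  refine ((finite_Iic k).biUnion fun m _ => hA m).subset ?_
  rintro ξ ⟨hξ, hk⟩
  exact mem_biUnion (csSup_le' fun x hx => (hk hx).le) ⟨hξ, rfl⟩

def IsLuzinRank {β : Type*} [LE β] (𝒜 : Set (Set ℕ)) (ι : Set ℕ → β) : Prop :=
  ∀ B ∈ 𝒜, ∀ k : ℕ, {C ∈ 𝒜 | ι C ≤ ι B ∧ C ∩ B ⊆ Iio k}.Finite

theorem IsLuzinFamily.exists_isLuzinRank {𝒜 : Set (Set ℕ)} (h : IsLuzinFamily 𝒜) :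
    ∃ ι : Set ℕ → Ordinal.{0}, IsLuzinRank 𝒜 ι := by
  obtain ⟨-, A, -, hsurj, -, hluzin⟩ := h
  choose! ι hι hAι using hsurj
  refine ⟨ι, fun B hB k => ?_⟩
  have hfin := ((finite_setOf_inter_subset_Iio_of_sSup (hluzin _ (hι B hB)) k).insert (ι B)).image A
  refine hfin.subset fun C ⟨hC, hle, hCB⟩ => ⟨ι C, ?_, hAι C hC⟩
  rcases hle.lt_or_eq with hlt | heq
  · exact Or.inr ⟨hlt, by rwa [hAι C hC, hAι B hB]⟩
  · exact Or.inl heq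

def IsTailBound (p : Set ℕ × Set ℕ) (a b : Finset (Set ℕ)) (n : ℕ) : Prop :=
  (∀ C ∈ a, C ⊆ p.1 ∪ Iio n) ∧ ∀ C ∈ b, C ⊆ p.2 ∪ Iio n

theorem Represents.exists_isTailBound {𝒜 : Set (Set ℕ)} {p : Set ℕ × Set ℕ}
    {a b : Finset (Set ℕ)} (h : Represents 𝒜 p a b) : ∃ n, IsTailBound p a b n := by
  obtain ⟨-, -, ha, hb⟩ := h
  obtain ⟨N, hN⟩ := (ha.union hb).bddAbove
  refine ⟨N + 1, fun C hC x hx => ?_, fun C hC x hx => ?_⟩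
  · by_cases hxp : x ∈ p.1
    · exact Or.inl hxp
    · exact Or.inr (Nat.lt_succ_of_le (hN (Or.inl (Or.inr ⟨mem_biUnion hC hx, hxp⟩))))
  · by_cases hxp : x ∈ p.2
    · exact Or.inl hxp
    · exact Or.inr (Nat.lt_succ_of_le (hN (Or.inr (Or.inr ⟨mem_biUnion hC hx, hxp⟩))))

theorem Compat.symm {𝒜 : Set (Set ℕ)} {p q : Set ℕ × Set ℕ} (h : Compat 𝒜 p q) :
    Compat 𝒜 q p :=
  let ⟨r, hr, hrp, hrq⟩ := h
  ⟨r, hr, hrq, hrp⟩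

theorem Compat.disjoint_fst_snd {𝒜 : Set (Set ℕ)} {p q : Set ℕ × Set ℕ} (h : Compat 𝒜 p q) :
    Disjoint p.1 q.2 := by
  obtain ⟨r, ⟨hr, -⟩, ⟨hrp, -⟩, ⟨-, hrq⟩⟩ := h
  exact (disjoint_iff_inter_eq_empty.2 hr).mono hrp hrq

theorem inter_subset_Iio_of_disjoint {B C X Y : Set ℕ} {n : ℕ} (hB : B ⊆ X ∪ Iio n)
    (hC : C ⊆ Y ∪ Iio n) (hXY : Disjoint X Y) : C ∩ B ⊆ Iio n := by
  rintro x ⟨hxC, hxB⟩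
  rcases hC hxC, hB hxB with ⟨hxY | hx, hxX | hx'⟩
  exacts [absurd hxY (hXY.notMem_of_mem_left hxX), hx', hx, hx]

section LuzinRank

variable {β : Type*} [LinearOrder β] {𝒜 : Set (Set ℕ)} {ι : Set ℕ → β}

noncomputable def repRank (ι : Set ℕ → β) (a b : Finset (Set ℕ)) : WithBot β :=
  (a ∪ b).sup fun C => ↑(ι C)

theorem coe_subset_setOf_inter_subset_Iio {s : Finset (Set ℕ)} {B X Y : Set ℕ} {k : ℕ}
    (hs : ↑s ⊆ 𝒜) (hrank : ∀ C ∈ s, ι C ≤ ι B) (hB : B ⊆ X ∪ Iio k)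
    (hsY : ∀ C ∈ s, C ⊆ Y ∪ Iio k) (hXY : Disjoint X Y) :
    ↑s ⊆ {C ∈ 𝒜 | ι C ≤ ι B ∧ C ∩ B ⊆ Iio k} :=
  fun C hC => ⟨hs hC, hrank C hC, inter_subset_Iio_of_disjoint hB (hsY C hC) hXY⟩

theorem finite_setOf_compat_repRank_le (hι : IsLuzinRank 𝒜 ι) {P : Set (Set ℕ × Set ℕ)}
    {a b : Set ℕ × Set ℕ → Finset (Set ℕ)} {n : Set ℕ × Set ℕ → ℕ}
    (hrep : ∀ p ∈ P, Represents 𝒜 p (a p) (b p))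
    (htail : ∀ p ∈ P, IsTailBound p (a p) (b p) (n p))
    (hed : ∀ p ∈ P, ∀ q ∈ P, p ≠ q → EssDistinct 𝒜 p q) {p : Set ℕ × Set ℕ} (hp : p ∈ P) :
    {q | q ∈ P ∧ n q = n p ∧ Compat 𝒜 p q ∧
      repRank ι (a q) (b q) ≤ repRank ι (a p) (b p)}.Finite := by
  have hinj_a : InjOn a P := fun p hp q hq h => by_contra fun hne =>
    (hed p hp q hq hne _ _ _ _ (hrep p hp) (hrep q hq)).1 h
  have hinj_b : InjOn b P := fun p hp q hq h => by_contra fun hne =>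
    (hed p hp q hq hne _ _ _ _ (hrep p hp) (hrep q hq)).2 h
  rcases (a p ∪ b p).eq_empty_or_nonempty with hemp | hne
  · refine (finite_setOf_coe_subset hinj_b finite_empty).subset ?_
    rintro q ⟨hq, -, -, hle⟩
    refine ⟨hq, fun C hC => ?_⟩
    have hbot : repRank ι (a q) (b q) = ⊥ := by simpa [repRank, hemp] using hle
    exact absurd ((Finset.sup_eq_bot_iff _ _).1 hbot C (Finset.mem_union_right _ hC))
      WithBot.coe_ne_bot
  obtain ⟨B, hB, hρ⟩ := Finset.exists_mem_eq_sup _ hne fun C => (ι C : WithBot β)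
  have hrank : ∀ q, repRank ι (a q) (b q) ≤ repRank ι (a p) (b p) →
      ∀ C ∈ a q ∪ b q, ι C ≤ ι B := fun q hle C hC =>
    WithBot.coe_le_coe.1 ((Finset.le_sup (f := fun C => (ι C : WithBot β)) hC).trans
      (hle.trans_eq hρ))
  rcases Finset.mem_union.1 hB with hBa | hBb
  · refine (finite_setOf_coe_subset hinj_b (hι B ((hrep p hp).1 hBa) (n p))).subset ?_
    rintro q ⟨hq, hnq, hpq, hle⟩
    exact ⟨hq, coe_subset_setOf_inter_subset_Iio (hrep q hq).2.1
      (fun C hC => hrank q hle C (Finset.mem_union_right _ hC)) ((htail p hp).1 B hBa)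
      (hnq ▸ (htail q hq).2) hpq.disjoint_fst_snd⟩
  · refine (finite_setOf_coe_subset hinj_a (hι B ((hrep p hp).2.1 hBb) (n p))).subset ?_
    rintro q ⟨hq, hnq, hpq, hle⟩
    exact ⟨hq, coe_subset_setOf_inter_subset_Iio (hrep q hq).1
      (fun C hC => hrank q hle C (Finset.mem_union_left _ hC)) ((htail p hp).2 B hBb)
      (hnq ▸ (htail q hq).1) hpq.symm.disjoint_fst_snd.symm⟩

end LuzinRank

/-- every Luzin family is an `L`-family: any set of pairwise essentially
distinct conditions of `ℙ_𝒜` is a countable union of sets of pairwise incompatible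
conditions. -/
theorem statement8 (𝒜 : Set (Set ℕ)) (h𝒜 : IsLuzinFamily 𝒜)
    (P : Set (Set ℕ × Set ℕ)) (hP : ∀ p ∈ P, SplitCond 𝒜 p)
    (hed : ∀ p ∈ P, ∀ q ∈ P, p ≠ q → EssDistinct 𝒜 p q) :
    ∃ Pn : ℕ → Set (Set ℕ × Set ℕ), P = ⋃ n, Pn n ∧
      ∀ n, ∀ p ∈ Pn n, ∀ q ∈ Pn n, p ≠ q → ¬Compat 𝒜 p q := by
  obtain ⟨ι, hι⟩ := h𝒜.exists_isLuzinRank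
  choose! a b hrep using fun p hp => (hP p hp).2
  choose! n hn using fun p hp => (hrep p hp).exists_isTailBound
  obtain ⟨c, hc⟩ := exists_nat_coloring_of_rank
    (r := fun p q => p ∈ P ∧ q ∈ P ∧ n p = n q ∧ Compat 𝒜 p q)
    (fun p q ⟨hp, hq, hnpq, hpq⟩ => ⟨hq, hp, hnpq.symm, hpq.symm⟩)
    (fun p => repRank ι (a p) (b p)) fun p => by
      by_cases hp : p ∈ P
      · exact (finite_setOf_compat_repRank_le hι hrep hn hed hp).subset
          fun q ⟨_, ⟨_, hq, hnpq, hpq⟩, hle⟩ => ⟨hq, hnpq.symm, hpq, hle⟩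
      · exact finite_empty.subset fun q ⟨_, ⟨hp', _⟩, _⟩ => hp hp'
  refine exists_iUnion_eq_of_nat_coloring (fun p => Nat.pair (n p) (c p))
    fun p hp q hq hne hpq hpair => ?_
  obtain ⟨hnpq, hcpq⟩ := Nat.pair_eq_pair.1 hpair
  exact hc p q hne ⟨hp, hq, hnpq, hpq⟩ hcpq
end

section
/- There is an a.d.-family 𝒜 of subsets of ℕ of cardinality continuum such that the splitting partial order ℙ_𝒜 contains an antichain (a set of pairwise incompatible conditions) of cardinality continuum. -/
open Set Filter Cardinal

/-!
Number the nodes of the binary tree `2^{<ω}`. For `x ∈ 2^ω` let `A_x` be the branch through `x`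
and `B_x = {x ↾ n ⌢ (1 - x n) : n ∈ ℕ}` the set of nodes at which a sequence leaves `x`. Two such
sets coming from `x ≠ y` meet only at nodes below the first splitting level of `x` and `y`, so the
`A_x`, `B_x` form an a.d.-family of size `𝔠`; as `A_x ∩ B_x = ∅`, `(A_x, B_x)` is a condition. For `x ≠ y` the node
`x ↾ (k + 1)`, `k` the first level where `x` and `y` differ, lies in `A_x ∩ B_y`; a common extension
of `(A_x, B_x)` and `(A_y, B_y)` would contain it on both sides.
-/

section SplittingOrder

variable {𝒜 : Set (Set ℕ)}

theorem splitCond_of_mem {A B : Set ℕ} (hA : A ∈ 𝒜) (hB : B ∈ 𝒜) (hAB : A ∩ B = ∅) :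
    SplitCond 𝒜 (A, B) := by
  refine ⟨hAB, {A}, {B}, ?_, ?_, ?_, ?_⟩ <;> simp [hA, hB, eqStar]

theorem not_compat_of_inter_nonempty {p q : Set ℕ × Set ℕ} (h : (p.1 ∩ q.2).Nonempty) :
    ¬Compat 𝒜 p q := by
  rintro ⟨r, ⟨hr, -⟩, ⟨hp, -⟩, ⟨-, hq⟩⟩
  obtain ⟨k, hk⟩ := h
  simpa [hr] using Set.mem_inter (hp hk.1) (hq hk.2)

end SplittingOrder

namespace CantorTree

open Function

def node (x : ℕ → Bool) (n : ℕ) (b : Bool) : ℕ :=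
  Encodable.encode ((List.range n).map x ++ [b])

/-- `branchSet x false` is `A_x` and `branchSet x true` is `B_x`. -/
def branchSet (x : ℕ → Bool) (s : Bool) : Set ℕ :=
  range fun n => node x n (x n ^^ s)

def family : Set (Set ℕ) := range (uncurry branchSet)

def cond (x : ℕ → Bool) : Set ℕ × Set ℕ := (branchSet x false, branchSet x true)

theorem node_eq_node_iff {x y : ℕ → Bool} {n m : ℕ} {b c : Bool} :
    node x n b = node y m c ↔ n = m ∧ (∀ i < n, x i = y i) ∧ b = c := by
  constructor
  · intro h
    obtain ⟨hxy, hbc⟩ := List.append_inj' (Encodable.encode_inj.mp h) rfl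
    have hnm : n = m := by simpa using congrArg List.length hxy
    subst hnm
    refine ⟨rfl, fun i hi => ?_, by simpa using hbc⟩
    exact List.map_inj_left.mp hxy i (List.mem_range.mpr hi)
  · rintro ⟨rfl, hxy, rfl⟩
    simp only [node, List.map_inj_left.mpr fun i hi => hxy i (List.mem_range.mp hi)]

theorem branchSet_infinite (x : ℕ → Bool) (s : Bool) : (branchSet x s).Infinite :=
  infinite_range_of_injective fun _ _ h => (node_eq_node_iff.mp h).1

theorem branchSet_inter_finite {x y : ℕ → Bool} (hxy : x ≠ y) (s t : Bool) :
    (branchSet x s ∩ branchSet y t).Finite := by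
  obtain ⟨k, hk⟩ := Function.ne_iff.mp hxy
  refine ((finite_Iic k).image fun n => node x n (x n ^^ s)).subset ?_
  rintro _ ⟨⟨n, rfl⟩, ⟨m, hm⟩⟩
  obtain ⟨-, hagree, -⟩ := node_eq_node_iff.mp hm.symm
  exact ⟨n, not_lt.mp fun hkn => hk (hagree k hkn), rfl⟩

theorem branchSet_inter_branchSet_of_ne (x : ℕ → Bool) {s t : Bool} (hst : s ≠ t) :
    branchSet x s ∩ branchSet x t = ∅ := by
  refine eq_empty_of_forall_notMem ?_
  rintro _ ⟨⟨n, rfl⟩, ⟨m, hm⟩⟩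
  obtain ⟨rfl, -, hbits⟩ := node_eq_node_iff.mp hm
  exact hst (Bool.xor_right_inj.mp hbits).symm

theorem branchSet_inter_finite_of_ne {x y : ℕ → Bool} {s t : Bool} (h : (x, s) ≠ (y, t)) :
    (branchSet x s ∩ branchSet y t).Finite := by
  by_cases hxy : x = y
  · subst hxy
    have hst : s ≠ t := fun hst => h (by rw [hst])
    simp [branchSet_inter_branchSet_of_ne x hst]
  · exact branchSet_inter_finite hxy s t

theorem branchSet_injective : Injective (uncurry branchSet) := by
  rintro ⟨x, s⟩ ⟨y, t⟩ h
  by_contra hne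
  have hfin := branchSet_inter_finite_of_ne hne
  rw [show branchSet y t = branchSet x s from h.symm, inter_self] at hfin
  exact branchSet_infinite x s hfin

theorem branchSet_false_inter_true_nonempty {x y : ℕ → Bool} (hxy : x ≠ y) :
    (branchSet x false ∩ branchSet y true).Nonempty := by
  have hdiff := Function.ne_iff.mp hxy
  set k := Nat.find hdiff
  refine ⟨node x k (x k), ⟨k, by simp⟩, ⟨k, ?_⟩⟩
  refine node_eq_node_iff.mpr ⟨rfl, fun i hi => ?_, ?_⟩
  · exact (not_not.mp (Nat.find_min hdiff hi)).symm
  · simpa using (Bool.eq_not_of_ne (Nat.find_spec hdiff)).symm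

theorem mk_family : #family = 𝔠 := by
  rw [family, mk_range_eq _ branchSet_injective, mk_prod, mk_arrow]
  simp only [lift_id, mk_bool, mk_nat, two_power_aleph0]
  exact mul_eq_left aleph0_le_continuum (nat_lt_continuum 2).le two_ne_zero

theorem adFamily_family : ADFamily family := by
  refine ⟨fun hc => ?_, ?_, ?_⟩
  · have := hc.le_aleph0
    rw [mk_family] at this
    exact this.not_gt aleph0_lt_continuum
  · rintro _ ⟨⟨x, s⟩, rfl⟩
    exact branchSet_infinite x s
  · rintro _ ⟨⟨x, s⟩, rfl⟩ _ ⟨⟨y, t⟩, rfl⟩ hne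
    exact branchSet_inter_finite_of_ne fun h => hne (congrArg (uncurry branchSet) h)

theorem splitAntichain_range_cond : SplitAntichain family (range cond) := by
  refine ⟨?_, ?_⟩
  · rintro _ ⟨x, rfl⟩
    exact splitCond_of_mem ⟨(x, false), rfl⟩ ⟨(x, true), rfl⟩
      (branchSet_inter_branchSet_of_ne x Bool.false_ne_true)
  · rintro _ ⟨x, rfl⟩ _ ⟨y, rfl⟩ hne
    exact not_compat_of_inter_nonempty
      (branchSet_false_inter_true_nonempty fun h => hne (congrArg cond h))

theorem cond_injective : Injective cond := fun x y h =>
  congrArg Prod.fst <| branchSet_injective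
    (show uncurry branchSet (x, false) = uncurry branchSet (y, false) from congrArg Prod.fst h)

theorem mk_range_cond : #(range cond) = 𝔠 := by
  rw [mk_range_eq cond cond_injective, mk_arrow]
  simp [two_power_aleph0]

end CantorTree

/-- there is an a.d.-family of cardinality continuum whose splitting order
contains an antichain of cardinality continuum. -/
theorem statement9 :
    ∃ 𝒜 : Set (Set ℕ), ADFamily 𝒜 ∧ Cardinal.mk 𝒜 = Cardinal.continuum ∧
      ∃ P : Set (Set ℕ × Set ℕ), SplitAntichain 𝒜 P ∧
        Cardinal.mk P = Cardinal.continuum :=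
  ⟨CantorTree.family, CantorTree.adFamily_family, CantorTree.mk_family,
    range CantorTree.cond, CantorTree.splitAntichain_range_cond, CantorTree.mk_range_cond⟩
end

section
/- If an a.d.-family 𝒜 is ℝ-embeddable, then the splitting partial order ℙ_𝒜 is σ-centered. -/
open Set Filter Cardinal

section AuxST10

lemma eqStar_union_aux {X X' Y Y' : Set ℕ} (h1 : eqStar X X') (h2 : eqStar Y Y') :
    eqStar (X ∪ Y) (X' ∪ Y') := by
  refine (h1.union h2).subset ?_
  intro k hk
  simp only [Set.mem_symmDiff, Set.mem_union] at *
  tauto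

lemma splitCond_union_aux {𝒜 : Set (Set ℕ)} {p q : Set ℕ × Set ℕ}
    (hp : SplitCond 𝒜 p) (hq : SplitCond 𝒜 q)
    (hd : (p.1 ∪ q.1) ∩ (p.2 ∪ q.2) = ∅) :
    SplitCond 𝒜 (p.1 ∪ q.1, p.2 ∪ q.2) := by
  classical
  obtain ⟨_, ap, bp, hap, hbp, h1, h2⟩ := hp
  obtain ⟨_, aq, bq, haq, hbq, h3, h4⟩ := hq
  refine ⟨hd, ap ∪ aq, bp ∪ bq, ?_, ?_, ?_, ?_⟩
  · rw [Finset.coe_union]; exact Set.union_subset hap haq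
  · rw [Finset.coe_union]; exact Set.union_subset hbp hbq
  · rw [Finset.set_biUnion_union]; exact eqStar_union_aux h1 h3
  · rw [Finset.set_biUnion_union]; exact eqStar_union_aux h2 h4

lemma splitCond_biUnion_aux {𝒜 : Set (Set ℕ)} (F : Finset (Set ℕ × Set ℕ))
    (hc : ∀ p ∈ F, SplitCond 𝒜 p) (hd : ∀ p ∈ F, ∀ q ∈ F, p.1 ∩ q.2 = ∅) :
    SplitCond 𝒜 (⋃ p ∈ F, p.1, ⋃ p ∈ F, p.2) := by
  classical
  induction F using Finset.induction with
  | empty =>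
      simp only [Finset.notMem_empty, Set.iUnion_of_empty, Set.iUnion_empty]
      refine ⟨by simp, ∅, ∅, by simp, by simp, ?_, ?_⟩ <;>
        · simp only [Finset.notMem_empty, Set.iUnion_of_empty, Set.iUnion_empty]
          simpa [eqStar] using Set.finite_empty
  | @insert p F hpF ih =>
      rw [Finset.set_biUnion_insert, Finset.set_biUnion_insert]
      have hp : SplitCond 𝒜 p := hc p (Finset.mem_insert_self _ _)
      have hF : SplitCond 𝒜 (⋃ q ∈ F, q.1, ⋃ q ∈ F, q.2) :=
        ih (fun q hq => hc q (Finset.mem_insert_of_mem hq))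
          (fun q hq q' hq' => hd q (Finset.mem_insert_of_mem hq) q' (Finset.mem_insert_of_mem hq'))
      refine splitCond_union_aux hp hF ?_
      ext k
      simp only [Set.mem_inter_iff, Set.mem_union, Set.mem_iUnion, Set.mem_empty_iff_false,
        iff_false, not_and]
      rintro (hk1 | ⟨q, hq, hk1⟩) (hk2 | ⟨q', hq', hk2⟩)
      · have := hd p (Finset.mem_insert_self _ _) p (Finset.mem_insert_self _ _)
        exact absurd (Set.mem_inter hk1 hk2) (by rw [this]; exact id)
      · have := hd p (Finset.mem_insert_self _ _) q' (Finset.mem_insert_of_mem hq')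
        exact absurd (Set.mem_inter hk1 hk2) (by rw [this]; exact id)
      · have := hd q (Finset.mem_insert_of_mem hq) p (Finset.mem_insert_self _ _)
        exact absurd (Set.mem_inter hk1 hk2) (by rw [this]; exact id)
      · have := hd q (Finset.mem_insert_of_mem hq) q' (Finset.mem_insert_of_mem hq')
        exact absurd (Set.mem_inter hk1 hk2) (by rw [this]; exact id)

end AuxST10

/-- if an a.d.-family is `ℝ`-embeddable then `ℙ_𝒜` is σ-centered. -/
theorem statement10 (𝒜 : Set (Set ℕ)) (h𝒜 : ADFamily 𝒜) (h : REmbeddable 𝒜) :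
    SplitSigmaCentered 𝒜 := by
  classical
  obtain ⟨f, r, hfinj, hconv, hrinj⟩ := h
  -- open sets coded by finite sets of rational intervals
  set OI : Finset (ℚ × ℚ) → Set ℝ := fun U => ⋃ q ∈ U, Set.Ioo (q.1 : ℝ) (q.2 : ℝ) with hOI
  -- the "color" of a condition
  set Good : (Set ℕ × Set ℕ) → (Finset (ℚ × ℚ) × Finset (ℚ × ℚ) × ℕ × Finset ℕ × Finset ℕ) → Prop :=
    fun p c =>
      (OI c.1 ∩ OI c.2.1 = ∅) ∧
      p.1 ∩ Set.Iio c.2.2.1 = ↑c.2.2.2.1 ∧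
      p.2 ∩ Set.Iio c.2.2.1 = ↑c.2.2.2.2 ∧
      (∀ k ∈ p.1, c.2.2.1 ≤ k → (f k : ℝ) ∈ OI c.1) ∧
      (∀ k ∈ p.2, c.2.2.1 ≤ k → (f k : ℝ) ∈ OI c.2.1) with hGood
  set P : (Finset (ℚ × ℚ) × Finset (ℚ × ℚ) × ℕ × Finset ℕ × Finset ℕ) →
      Set (Set ℕ × Set ℕ) := fun c => {p | SplitCond 𝒜 p ∧ Good p c} with hP
  -- every condition gets a color
  have hcover : ∀ p : Set ℕ × Set ℕ, SplitCond 𝒜 p → ∃ c, Good p c := by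
    rintro ⟨A, B⟩ ⟨hdisj, a, b, ha𝒜, hb𝒜, haeq, hbeq⟩
    simp only at hdisj haeq hbeq ⊢
    -- members of a and b are distinct
    have hab : ∀ A' ∈ a, ∀ B' ∈ b, A' ≠ B' := by
      intro A' hA' B' hB' hne
      subst hne
      have h1 : (A' \ A).Finite :=
        haeq.subset (fun k hk => by
          simp only [Set.mem_symmDiff]
          exact Or.inr ⟨Set.mem_biUnion hA' hk.1, hk.2⟩)
      have h2 : (A' \ B).Finite :=
        hbeq.subset (fun k hk => by
          simp only [Set.mem_symmDiff]
          exact Or.inr ⟨Set.mem_biUnion hB' hk.1, hk.2⟩)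
      have : A'.Finite := by
        refine (h1.union h2).subset ?_
        intro k hk
        by_cases hkA : k ∈ A
        · by_cases hkB : k ∈ B
          · exact absurd (Set.mem_inter hkA hkB) (by rw [hdisj]; exact id)
          · exact Or.inr ⟨hk, hkB⟩
        · exact Or.inl ⟨hk, hkA⟩
      exact h𝒜.2.1 A' (hb𝒜 hB') this
    -- a separation constant δ
    have hδ : ∃ δ : ℝ, 0 < δ ∧ ∀ A' ∈ a, ∀ B' ∈ b, 3 * δ ≤ |r A' - r B'| := by
      by_cases hne : (a ×ˢ b).Nonempty
      · obtain ⟨z, hz, hzmin⟩ := Finset.exists_min_image (a ×ˢ b)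
          (fun z => |r z.1 - r z.2|) hne
        rw [Finset.mem_product] at hz
        have hz0 : r z.1 ≠ r z.2 :=
          hrinj z.1 (ha𝒜 hz.1) z.2 (hb𝒜 hz.2) (hab z.1 hz.1 z.2 hz.2)
        have hpos : 0 < |r z.1 - r z.2| := abs_pos.2 (sub_ne_zero.2 hz0)
        refine ⟨|r z.1 - r z.2| / 3, by linarith, ?_⟩
        intro A' hA' B' hB'
        have := hzmin (A', B') (Finset.mem_product.2 ⟨hA', hB'⟩)
        simp only at this
        linarith
      · refine ⟨1, one_pos, fun A' hA' B' hB' => ?_⟩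
        exact absurd (Finset.mem_product.2 ⟨hA', hB'⟩ : (A', B') ∈ a ×ˢ b)
          (fun hx => hne ⟨_, hx⟩)
    obtain ⟨δ, hδ0, hδsep⟩ := hδ
    -- rational intervals around each limit point
    have hg : ∀ C : Set ℕ, ∃ q : ℚ × ℚ,
        ((q.1 : ℝ) ∈ Set.Ioo (r C - δ) (r C)) ∧ ((q.2 : ℝ) ∈ Set.Ioo (r C) (r C + δ)) := by
      intro C
      obtain ⟨q1, hq1⟩ := exists_rat_btwn (sub_lt_self (r C) hδ0)
      obtain ⟨q2, hq2⟩ := exists_rat_btwn (lt_add_of_pos_right (r C) hδ0)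
      exact ⟨(q1, q2), hq1, hq2⟩
    choose g hg1 hg2 using hg
    set U : Finset (ℚ × ℚ) := a.image g with hU
    set V : Finset (ℚ × ℚ) := b.image g with hV
    -- the two open sets are disjoint
    have hUV : OI U ∩ OI V = ∅ := by
      ext x
      simp only [hOI, Set.mem_inter_iff, Set.mem_iUnion, Set.mem_empty_iff_false, iff_false,
        not_and, not_exists]
      rintro ⟨q, hq, hx1⟩ q' hq' hx2
      rw [hU, Finset.mem_image] at hq
      rw [hV, Finset.mem_image] at hq'
      obtain ⟨A', hA', rfl⟩ := hq
      obtain ⟨B', hB', rfl⟩ := hq'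
      have s1 := hg1 A'; have s2 := hg2 A'
      have s3 := hg1 B'; have s4 := hg2 B'
      simp only [Set.mem_Ioo] at s1 s2 s3 s4 hx1 hx2
      have := hδsep A' hA' B' hB'
      rcases abs_cases (r A' - r B') with ⟨he, _⟩ | ⟨he, _⟩ <;> rw [he] at this <;> linarith
    -- radii inside the rational intervals
    set ε : Set ℕ → ℝ := fun C => min (r C - (g C).1) ((g C).2 - r C) with hε
    have hε0 : ∀ C, 0 < ε C := by
      intro C
      have s1 := hg1 C; have s2 := hg2 C
      simp only [Set.mem_Ioo] at s1 s2
      exact lt_min (by linarith) (by linarith)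
    -- the exceptional finite set
    set S : Set ℕ := symmDiff A (⋃ A' ∈ a, A') ∪ symmDiff B (⋃ B' ∈ b, B') ∪
        ⋃ C ∈ (a ∪ b : Finset (Set ℕ)), {m ∈ C | ε C ≤ |(f m : ℝ) - r C|} with hS
    have hSfin : S.Finite := by
      refine ((haeq.union hbeq).union ?_)
      refine Set.Finite.biUnion (a ∪ b).finite_toSet ?_
      intro C hC
      rw [Finset.coe_union] at hC
      rcases hC with hC | hC
      · exact (hconv C (ha𝒜 hC)).2 (ε C) (hε0 C)
      · exact (hconv C (hb𝒜 hC)).2 (ε C) (hε0 C)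
    obtain ⟨m, hm⟩ := hSfin.bddAbove
    set n : ℕ := m + 1 with hn
    have hSn : ∀ k ∈ S, k < n := fun k hk => Nat.lt_succ_of_le (hm hk)
    -- tail conditions
    have htail1 : ∀ k ∈ A, n ≤ k → (f k : ℝ) ∈ OI U := by
      intro k hk hnk
      have hkS : k ∉ S := fun hkS => absurd (hSn k hkS) (not_lt.2 hnk)
      have hkU : k ∈ ⋃ A' ∈ a, A' := by
        by_contra hkU
        exact hkS (Or.inl (Or.inl (by simp only [Set.mem_symmDiff]; exact Or.inl ⟨hk, hkU⟩)))
      obtain ⟨A', hA', hkA'⟩ := by simpa using hkU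
      have hbad : ¬ (ε A' ≤ |(f k : ℝ) - r A'|) := by
        intro hbad
        exact hkS (Or.inr (Set.mem_biUnion (by simp [Finset.mem_union, hA'] :
          A' ∈ (a ∪ b : Finset (Set ℕ))) ⟨hkA', hbad⟩))
      push_neg at hbad
      rcases abs_lt.1 hbad with ⟨hb1, hb2⟩
      have hε1 : ε A' ≤ r A' - (g A').1 := min_le_left _ _
      have hε2 : ε A' ≤ (g A').2 - r A' := min_le_right _ _
      refine Set.mem_biUnion (Finset.mem_image_of_mem g hA') ?_
      exact Set.mem_Ioo.2 ⟨by linarith, by linarith⟩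
    have htail2 : ∀ k ∈ B, n ≤ k → (f k : ℝ) ∈ OI V := by
      intro k hk hnk
      have hkS : k ∉ S := fun hkS => absurd (hSn k hkS) (not_lt.2 hnk)
      have hkU : k ∈ ⋃ B' ∈ b, B' := by
        by_contra hkU
        exact hkS (Or.inl (Or.inr (by simp only [Set.mem_symmDiff]; exact Or.inl ⟨hk, hkU⟩)))
      obtain ⟨B', hB', hkB'⟩ := by simpa using hkU
      have hbad : ¬ (ε B' ≤ |(f k : ℝ) - r B'|) := by
        intro hbad
        exact hkS (Or.inr (Set.mem_biUnion (by simp [Finset.mem_union, hB'] :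
          B' ∈ (a ∪ b : Finset (Set ℕ))) ⟨hkB', hbad⟩))
      push_neg at hbad
      rcases abs_lt.1 hbad with ⟨hb1, hb2⟩
      have hε1 : ε B' ≤ r B' - (g B').1 := min_le_left _ _
      have hε2 : ε B' ≤ (g B').2 - r B' := min_le_right _ _
      refine Set.mem_biUnion (Finset.mem_image_of_mem g hB') ?_
      exact Set.mem_Ioo.2 ⟨by linarith, by linarith⟩
    -- initial segments
    have hAfin : (A ∩ Set.Iio n).Finite := (Set.finite_Iio n).subset Set.inter_subset_right
    have hBfin : (B ∩ Set.Iio n).Finite := (Set.finite_Iio n).subset Set.inter_subset_right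
    exact ⟨(U, V, n, hAfin.toFinset, hBfin.toFinset),
      hUV, (hAfin.coe_toFinset).symm, (hBfin.coe_toFinset).symm, htail1, htail2⟩
  -- each color class is centered
  have hcent : ∀ c, SplitCentered 𝒜 (P c) := by
    intro c F hF
    have key : ∀ p ∈ F, ∀ q ∈ F, p.1 ∩ q.2 = ∅ := by
      intro p hp q hq
      obtain ⟨hpc, hpUV, hp1, hp2, hp3, hp4⟩ := hF hp
      obtain ⟨hqc, hqUV, hq1, hq2, hq3, hq4⟩ := hF hq
      ext k
      simp only [Set.mem_inter_iff, Set.mem_empty_iff_false, iff_false, not_and]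
      intro hk1 hk2
      by_cases hkn : k < c.2.2.1
      · have hkp : k ∈ (↑c.2.2.2.1 : Set ℕ) := by rw [← hp1]; exact ⟨hk1, hkn⟩
        have hkq : k ∈ q.1 := by
          have : k ∈ q.1 ∩ Set.Iio c.2.2.1 := by rw [hq1]; exact hkp
          exact this.1
        exact absurd (Set.mem_inter hkq hk2) (by rw [hqc.1]; exact id)
      · push_neg at hkn
        have h1 : (f k : ℝ) ∈ OI c.1 := hp3 k hk1 hkn
        have h2 : (f k : ℝ) ∈ OI c.2.1 := hq4 k hk2 hkn
        exact absurd (Set.mem_inter h1 h2) (by rw [hpUV]; exact id)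
    refine ⟨(⋃ p ∈ F, p.1, ⋃ p ∈ F, p.2),
      splitCond_biUnion_aux F (fun p hp => (hF hp).1) key, ?_⟩
    intro p hp
    exact ⟨Set.subset_biUnion_of_mem hp, Set.subset_biUnion_of_mem hp⟩
  -- enumerate the countably many colors
  obtain ⟨e, he⟩ := exists_surjective_nat (Finset (ℚ × ℚ) × Finset (ℚ × ℚ) × ℕ × Finset ℕ × Finset ℕ)
  refine ⟨fun n => P (e n), ?_, fun n => hcent (e n)⟩
  ext p
  simp only [Set.mem_iUnion, Set.mem_setOf_eq]
  constructor
  · rintro ⟨n, hn, -⟩; exact hn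
  · intro hp
    obtain ⟨c, hc⟩ := hcover p hp
    obtain ⟨n, rfl⟩ := he c
    exact ⟨n, hp, hc⟩
end

section
/- If 𝒜 is a maximal a.d.-family, then the splitting partial order ℙ_𝒜 is not σ-centered. -/
open Set Filter Cardinal

/-- if `𝒜` is a maximal a.d.-family then `ℙ_𝒜` is not σ-centered. -/
theorem statement11 (𝒜 : Set (Set ℕ)) (h𝒜 : MaximalADFamily 𝒜) :
    ¬SplitSigmaCentered 𝒜 := by
  classical
  rintro ⟨P, hcov, hcent⟩
  obtain ⟨⟨hunc, hinf, had⟩, hmax⟩ := h𝒜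
  set U : ℕ → Set ℕ := fun n => ⋃ q ∈ P n, (q : Set ℕ × Set ℕ).1 with hUdef
  -- centered pieces have disjoint first/second coordinates
  have hdisj : ∀ n, ∀ p ∈ P n, ∀ q ∈ P n, ∀ k : ℕ, k ∈ q.1 → k ∈ p.2 → False := by
    intro n p hp q hq k hk1 hk2
    obtain ⟨r, hr, hext⟩ := hcent n {p, q} (by
      intro x hx
      simp only [Finset.coe_insert, Finset.coe_singleton, Set.mem_insert_iff,
        Set.mem_singleton_iff] at hx
      rcases hx with rfl | rfl <;> assumption)
    have h1 : k ∈ r.1 := (hext q (by simp)).1 hk1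
    have h2 : k ∈ r.2 := (hext p (by simp)).2 hk2
    have h3 := hr.1
    have : k ∈ r.1 ∩ r.2 := ⟨h1, h2⟩
    rw [h3] at this
    exact this
  -- separation property
  have hsep : ∀ A ∈ 𝒜, ∀ B ∈ 𝒜, A ≠ B → ∃ n, (A \ U n).Finite ∧ (B ∩ U n).Finite := by
    intro A hA B hB hAB
    have hfin : (A ∩ B).Finite := had A hA B hB hAB
    have hcond : SplitCond 𝒜 (A \ B, B \ A) := by
      refine ⟨?_, {A}, {B}, ?_, ?_, ?_, ?_⟩
      · ext k
        simp only [Set.mem_inter_iff, Set.mem_diff, Set.mem_empty_iff_false, iff_false]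
        tauto
      · intro x hx
        simp only [Finset.coe_singleton, Set.mem_singleton_iff] at hx
        rw [hx]; exact hA
      · intro x hx
        simp only [Finset.coe_singleton, Set.mem_singleton_iff] at hx
        rw [hx]; exact hB
      · show eqStar (A \ B) _
        rw [Finset.set_biUnion_singleton]
        apply hfin.subset
        intro k hk
        rcases Set.mem_symmDiff.mp hk with ⟨⟨h1, h2⟩, h3⟩ | ⟨h1, h2⟩
        · exact absurd h1 h3
        · constructor
          · exact h1
          · by_contra hkB
            exact h2 ⟨h1, hkB⟩
      · show eqStar (B \ A) _
        rw [Finset.set_biUnion_singleton]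
        apply hfin.subset
        intro k hk
        rcases Set.mem_symmDiff.mp hk with ⟨⟨h1, h2⟩, h3⟩ | ⟨h1, h2⟩
        · exact absurd h1 h3
        · refine ⟨?_, h1⟩
          by_contra hkA
          exact h2 ⟨h1, hkA⟩
    have hx : (A \ B, B \ A) ∈ ⋃ n, P n := by rw [hcov]; exact hcond
    obtain ⟨n, hn⟩ := Set.mem_iUnion.mp hx
    have hsub : A \ B ⊆ U n := by
      intro k hk
      exact Set.mem_biUnion hn hk
    refine ⟨n, ?_, ?_⟩
    · apply hfin.subset
      rintro k ⟨hkA, hkU⟩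
      refine ⟨hkA, ?_⟩
      by_contra hkB
      exact hkU (hsub ⟨hkA, hkB⟩)
    · apply hfin.subset
      rintro k ⟨hkB, hkU⟩
      obtain ⟨q, hq, hkq⟩ := Set.mem_iUnion₂.mp hkU
      refine ⟨?_, hkB⟩
      by_contra hkA
      exact hdisj n (A \ B, B \ A) hn q hq k hkq ⟨hkB, hkA⟩
  -- cells
  set Ns : (ℕ → Bool) → ℕ → Set ℕ := fun z m => {k | ∀ i < m, (k ∈ U i ↔ z i = true)}
    with hNsdef
  by_cases hall : ∀ A ∈ 𝒜, ∃ (m : ℕ) (z : ℕ → Bool),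
      (A ∩ Ns z m).Infinite ∧ (Ns z m \ A).Finite
  · -- countability contradiction
    choose M Z hMZinf hMZfin using hall
    apply hunc
    rw [Set.countable_iff_exists_injective]
    refine ⟨fun a => Encodable.encode (M a.1 a.2,
      (Finset.range (M a.1 a.2)).filter (fun i => Z a.1 a.2 i = true)), ?_⟩
    intro a b hab
    have h1 := Encodable.encode_injective hab
    have hm : M a.1 a.2 = M b.1 b.2 := congrArg Prod.fst h1
    have hset := congrArg Prod.snd h1
    simp only at hset
    have hz' : ∀ i, i < M a.1 a.2 → (Z a.1 a.2 i = true ↔ Z b.1 b.2 i = true) := by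
      intro i hi
      have h2 : i ∈ (Finset.range (M a.1 a.2)).filter (fun i => Z a.1 a.2 i = true) ↔
          i ∈ (Finset.range (M b.1 b.2)).filter (fun i => Z b.1 b.2 i = true) := by rw [hset]
      simp only [Finset.mem_filter, Finset.mem_range] at h2
      constructor
      · intro h; exact (h2.mp ⟨hi, h⟩).2
      · intro h; exact (h2.mpr ⟨hm ▸ hi, h⟩).2
    have hNeq : Ns (Z a.1 a.2) (M a.1 a.2) = Ns (Z b.1 b.2) (M b.1 b.2) := by
      ext k
      simp only [hNsdef, Set.mem_setOf_eq]
      constructor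
      · intro h i hi
        rw [← hz' i (hm ▸ hi)]
        exact h i (hm ▸ hi)
      · intro h i hi
        rw [hz' i hi]
        exact h i (hm ▸ hi)
    have heq : a.1 = b.1 := by
      by_contra hne
      have hfinAB : (a.1 ∩ b.1).Finite := had a.1 a.2 b.1 b.2 hne
      have hbig : ((a.1 ∩ Ns (Z a.1 a.2) (M a.1 a.2)) \
          (Ns (Z a.1 a.2) (M a.1 a.2) \ b.1)).Infinite := by
        apply (hMZinf a.1 a.2).diff
        rw [hNeq]
        exact hMZfin b.1 b.2
      apply hbig.mono ?_ hfinAB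
      rintro k ⟨⟨hka, hkn⟩, hk2⟩
      refine ⟨hka, ?_⟩
      by_contra hkb
      exact hk2 ⟨hkn, hkb⟩
    exact Subtype.ext heq
  · push_neg at hall
    obtain ⟨A, hA, hbad⟩ := hall
    have hAinf : A.Infinite := hinf A hA
    -- ultrafilter concentrating on A extending cofinite
    have hne : (Filter.cofinite ⊓ Filter.principal A).NeBot := by
      rw [Filter.inf_principal_neBot_iff]
      intro S hS
      have : (A \ Sᶜ).Infinite := hAinf.diff hS
      obtain ⟨k, hk1, hk2⟩ := this.nonempty
      exact ⟨k, by simpa using hk2, hk1⟩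
    obtain ⟨G, hG⟩ := Ultrafilter.exists_le (Filter.cofinite ⊓ Filter.principal A)
    have hAG : A ∈ G := by
      have : (G : Filter ℕ) ≤ Filter.principal A := hG.trans inf_le_right
      exact Filter.le_principal_iff.mp this
    have hGcof : ∀ S : Set ℕ, S ∈ G → S.Infinite := by
      intro S hS
      rw [Set.Infinite]
      intro hSfin
      have hSc : Sᶜ ∈ G := (hG.trans inf_le_left) (by simpa using hSfin)
      have : S ∩ Sᶜ ∈ G := Filter.inter_mem hS hSc
      rw [Set.inter_compl_self] at this
      exact Filter.empty_notMem (G : Filter ℕ) this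
    set z : ℕ → Bool := fun i => if U i ∈ G then true else false with hzdef
    have hz : ∀ i, (z i = true ↔ U i ∈ G) := by
      intro i
      rw [hzdef]
      by_cases h : U i ∈ G <;> simp [h]
    have hNsG : ∀ m, Ns z m ∈ G := by
      intro m
      induction m with
      | zero =>
        have : Ns z 0 = Set.univ := by
          ext k; simp [hNsdef]
        rw [this]; exact Filter.univ_mem
      | succ m ih =>
        have heq : Ns z (m + 1) = Ns z m ∩ {k | k ∈ U m ↔ z m = true} := by
          ext k
          simp only [hNsdef, Set.mem_setOf_eq, Set.mem_inter_iff]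
          constructor
          · intro h
            exact ⟨fun i hi => h i (Nat.lt_succ_of_lt hi), h m (Nat.lt_succ_self m)⟩
          · rintro ⟨h1, h2⟩ i hi
            rcases Nat.lt_succ_iff_lt_or_eq.mp hi with h | rfl
            · exact h1 i h
            · exact h2
        rw [heq]
        apply Filter.inter_mem ih
        by_cases hUm : U m ∈ G
        · have h1 : z m = true := (hz m).mpr hUm
          have : {k | k ∈ U m ↔ z m = true} = U m := by
            ext k; simp [h1]
          rw [this]; exact hUm
        · have h1 : ¬(z m = true) := fun h => hUm ((hz m).mp h)
          have : {k | k ∈ U m ↔ z m = true} = (U m)ᶜ := by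
            ext k; simp [h1]
          rw [this]
          exact Ultrafilter.compl_mem_iff_notMem.mpr hUm
    have hNinf : ∀ m, (A ∩ Ns z m).Infinite :=
      fun m => hGcof _ (Filter.inter_mem hAG (hNsG m))
    have hy : ∀ m : ℕ, ∃ k, k ∈ Ns z m \ A ∧ m < k := by
      intro m
      have hd : (Ns z m \ A).Infinite := hbad m z (hNinf m)
      obtain ⟨k, hk1, hk2⟩ := hd.exists_gt m
      exact ⟨k, hk1, hk2⟩
    choose y hy1 hy2 using hy
    have hYinf : (Set.range y).Infinite := by
      rw [Set.Infinite]
      intro hfin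
      obtain ⟨b, hb⟩ := hfin.bddAbove
      have h1 : y b ≤ b := hb ⟨b, rfl⟩
      exact absurd h1 (not_le.mpr (hy2 b))
    obtain ⟨B, hB, hYB⟩ := hmax (Set.range y) hYinf
    have hBA : B ≠ A := by
      rintro rfl
      obtain ⟨k, ⟨m, rfl⟩, hk2⟩ := hYB.nonempty
      exact (hy1 m).2 hk2
    obtain ⟨n, hAn, hBn⟩ := hsep A hA B hB (Ne.symm hBA)
    have hUnG : U n ∈ G := by
      by_contra h
      have h1 : (U n)ᶜ ∈ G := Ultrafilter.compl_mem_iff_notMem.mpr h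
      have h2 : A ∩ (U n)ᶜ ∈ G := Filter.inter_mem hAG h1
      have h3 : (A ∩ (U n)ᶜ).Infinite := hGcof _ h2
      apply h3
      apply hAn.subset
      rintro k ⟨hk1, hk2⟩
      exact ⟨hk1, hk2⟩
    have hzn : z n = true := (hz n).mpr hUnG
    have hsub2 : Set.range y ∩ B ⊆ (B ∩ U n) ∪ (y '' Set.Iic n) := by
      rintro k ⟨⟨m, rfl⟩, hkB⟩
      by_cases hm : m ≤ n
      · right; exact ⟨m, hm, rfl⟩
      · left
        refine ⟨hkB, ?_⟩
        have hmem : y m ∈ Ns z m := (hy1 m).1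
        have h4 := hmem n (lt_of_not_ge hm)
        exact h4.mpr hzn
    exact hYB ((hBn.union ((Set.finite_Iic n).image y)).subset hsub2)
end

section
/- Assume OCA. Then for every a.d.-family 𝒜, either the splitting partial order ℙ_𝒜 fails to satisfy the c.c.c. (has an uncountable antichain) or ℙ_𝒜 is σ-centered. -/
open Set Filter Cardinal

section S12Aux
open Classical

lemma symmDiff_biUnion_subset {ι : Type*} (s : Set ι) (f g : ι → Set ℕ) :
    symmDiff (⋃ i ∈ s, f i) (⋃ i ∈ s, g i) ⊆ ⋃ i ∈ s, symmDiff (f i) (g i) := by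
  intro n hn
  rw [Set.mem_symmDiff] at hn
  simp only [Set.mem_iUnion, Set.mem_symmDiff] at *
  rcases hn with ⟨⟨i, hi, hfi⟩, hng⟩ | ⟨⟨i, hi, hgi⟩, hnf⟩
  · exact ⟨i, hi, Or.inl ⟨hfi, fun h => hng ⟨i, hi, h⟩⟩⟩
  · exact ⟨i, hi, Or.inr ⟨hgi, fun h => hnf ⟨i, hi, h⟩⟩⟩

def toCondF (x : ℕ → Bool × Bool) : Set ℕ × Set ℕ :=
  ({n | (x n).1 = true}, {n | (x n).2 = true})

lemma toCondF_inj : Function.Injective toCondF := by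
  intro x y h
  have h1 := congrArg Prod.fst h
  have h2 := congrArg Prod.snd h
  simp only [toCondF, Set.ext_iff, Set.mem_setOf_eq] at h1 h2
  funext n
  apply Prod.ext
  · have := h1 n; cases hx : (x n).1 <;> cases hy : (y n).1 <;> simp_all
  · have := h2 n; cases hx : (x n).2 <;> cases hy : (y n).2 <;> simp_all

/-- If the members of a finite set of conditions are pairwise cross-disjoint,
they have a common lower bound. -/
lemma exists_lower_bound {𝒜 : Set (Set ℕ)} {F : Finset (Set ℕ × Set ℕ)}
    (h1 : ∀ p ∈ F, SplitCond 𝒜 p)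
    (h2 : ∀ p ∈ F, ∀ q ∈ F, p.1 ∩ q.2 = ∅) :
    ∃ r, SplitCond 𝒜 r ∧ ∀ p ∈ F, Extends r p := by
  classical
  refine ⟨(⋃ p ∈ (F : Set (Set ℕ × Set ℕ)), p.1, ⋃ p ∈ (F : Set (Set ℕ × Set ℕ)), p.2), ?_, ?_⟩
  · constructor
    · rw [Set.eq_empty_iff_forall_notMem]
      rintro n ⟨hn1, hn2⟩
      simp only [Set.mem_iUnion, Finset.mem_coe] at hn1 hn2
      obtain ⟨p, hp, hnp⟩ := hn1
      obtain ⟨q, hq, hnq⟩ := hn2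
      have := h2 p hp q hq
      rw [Set.eq_empty_iff_forall_notMem] at this
      exact this n ⟨hnp, hnq⟩
    · have hrep : ∀ p : Set ℕ × Set ℕ, ∃ a b : Finset (Set ℕ),
          p ∈ F → Represents 𝒜 p a b := by
        intro p
        by_cases hp : p ∈ F
        · obtain ⟨a, b, hab⟩ := (h1 p hp).2
          exact ⟨a, b, fun _ => hab⟩
        · exact ⟨∅, ∅, fun h => absurd h hp⟩
      choose a b hab using hrep
      refine ⟨F.biUnion a, F.biUnion b, ?_, ?_, ?_, ?_⟩
      · intro A hA
        simp only [Finset.coe_biUnion, Set.mem_iUnion, Finset.mem_coe] at hA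
        obtain ⟨p, hp, hAp⟩ := hA
        exact (hab p hp).1 hAp
      · intro A hA
        simp only [Finset.coe_biUnion, Set.mem_iUnion, Finset.mem_coe] at hA
        obtain ⟨p, hp, hAp⟩ := hA
        exact (hab p hp).2.1 hAp
      · have hU : (⋃ A ∈ F.biUnion a, A) = ⋃ p ∈ (F : Set (Set ℕ × Set ℕ)), ⋃ A ∈ a p, A := by
          ext n
          simp only [Set.mem_iUnion, Finset.mem_biUnion, Finset.mem_coe]
          aesop
        show eqStar _ _
        rw [eqStar, hU]
        refine Set.Finite.subset ?_ (symmDiff_biUnion_subset (F : Set (Set ℕ × Set ℕ))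
          (fun p => p.1) (fun p => ⋃ A ∈ a p, A))
        exact Set.Finite.biUnion F.finite_toSet fun p hp => (hab p hp).2.2.1
      · have hU : (⋃ A ∈ F.biUnion b, A) = ⋃ p ∈ (F : Set (Set ℕ × Set ℕ)), ⋃ A ∈ b p, A := by
          ext n
          simp only [Set.mem_iUnion, Finset.mem_biUnion, Finset.mem_coe]
          aesop
        show eqStar _ _
        rw [eqStar, hU]
        refine Set.Finite.subset ?_ (symmDiff_biUnion_subset (F : Set (Set ℕ × Set ℕ))
          (fun p => p.2) (fun p => ⋃ A ∈ b p, A))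
        exact Set.Finite.biUnion F.finite_toSet fun p hp => (hab p hp).2.2.2
  · intro p hp
    exact ⟨Set.subset_biUnion_of_mem (u := fun p : Set ℕ × Set ℕ => p.1) hp,
      Set.subset_biUnion_of_mem (u := fun p : Set ℕ × Set ℕ => p.2) hp⟩

end S12Aux

attribute [local instance] PiNat.metricSpace

/-- under OCA, for every a.d.-family `𝒜`, either `ℙ_𝒜` has an uncountable
antichain or `ℙ_𝒜` is σ-centered. -/
theorem statement12 (hOCA : OCA) (𝒜 : Set (Set ℕ)) (h𝒜 : ADFamily 𝒜) :
    (∃ P : Set (Set ℕ × Set ℕ), SplitAntichain 𝒜 P ∧ ¬P.Countable) ∨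
      SplitSigmaCentered 𝒜 := by
  classical
  -- the space of conditions, as a subspace of Cantor space
  let X : Type := {x : ℕ → Bool × Bool // SplitCond 𝒜 (toCondF x)}
  haveI : SecondCountableTopology (∀ _ : ℕ, Bool × Bool) :=
    inferInstanceAs (@SecondCountableTopology (∀ _ : ℕ, Bool × Bool) Pi.topologicalSpace)
  haveI : TopologicalSpace.SeparableSpace X :=
    TopologicalSpace.SecondCountableTopology.to_separableSpace
  -- the open symmetric coloring: incompatibility
  let K : Set (X × X) := {pq | ∃ n : ℕ,
    ((pq.1.1 n).1 = true ∧ (pq.2.1 n).2 = true) ∨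
    ((pq.1.1 n).2 = true ∧ (pq.2.1 n).1 = true)}
  have heval : ∀ n : ℕ, Continuous (fun x : ℕ → Bool × Bool => x n) := fun n =>
    continuous_apply n
  have hK : IsOpen K := by
    have : K = ⋃ n : ℕ, (fun pq : X × X => ((pq.1.1 n), (pq.2.1 n))) ⁻¹'
        {ab : (Bool × Bool) × (Bool × Bool) |
          (ab.1.1 = true ∧ ab.2.2 = true) ∨ (ab.1.2 = true ∧ ab.2.1 = true)} := by
      ext pq; simp [K]
    rw [this]
    refine isOpen_iUnion fun n => ?_
    refine IsOpen.preimage ?_ (isOpen_discrete _)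
    exact Continuous.prodMk
      (((heval n).comp continuous_subtype_val).comp continuous_fst)
      (((heval n).comp continuous_subtype_val).comp continuous_snd)
  have hKsymm : ∀ x y : X, (x, y) ∈ K → (y, x) ∈ K := by
    rintro x y ⟨n, h | h⟩
    · exact ⟨n, Or.inr ⟨h.2, h.1⟩⟩
    · exact ⟨n, Or.inl ⟨h.2, h.1⟩⟩
  -- membership in K yields witness of cross-intersection
  have hKwit : ∀ x y : X, (x, y) ∈ K → ¬Compat 𝒜 (toCondF x.1) (toCondF y.1) := by
    rintro x y ⟨n, hn⟩ ⟨r, hr, ⟨hx1, hx2⟩, ⟨hy1, hy2⟩⟩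
    have hrd := hr.1
    rw [Set.eq_empty_iff_forall_notMem] at hrd
    rcases hn with ⟨h1, h2⟩ | ⟨h1, h2⟩
    · exact hrd n ⟨hx1 h1, hy2 h2⟩
    · exact hrd n ⟨hy1 h2, hx2 h1⟩
  rcases hOCA X inferInstance K hK hKsymm with ⟨Y, hYc, hY⟩ | ⟨C, hCu, hC⟩
  · -- uncountable antichain
    left
    refine ⟨(fun y : X => toCondF y.1) '' Y, ⟨?_, ?_⟩, ?_⟩
    · rintro p ⟨y, _, rfl⟩; exact y.2
    · rintro p ⟨x, hx, rfl⟩ q ⟨y, hy, rfl⟩ hpq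
      have hxy : x ≠ y := fun h => hpq (by rw [h])
      exact hKwit x y (hY x hx y hy hxy)
    · intro hc
      have hinj : Function.Injective (fun y : X => toCondF y.1) :=
        fun x y h => Subtype.ext (toCondF_inj h)
      exact hYc (((hc.preimage hinj).mono (Set.subset_preimage_image _ Y)))
  · -- σ-centered
    right
    refine ⟨fun n => (fun y : X => toCondF y.1) '' C n, ?_, ?_⟩
    · ext p
      simp only [Set.mem_iUnion, Set.mem_image, Set.mem_setOf_eq]
      constructor
      · rintro ⟨n, y, _, rfl⟩; exact y.2
      · intro hp
        have hxp : toCondF (fun n => (decide (n ∈ p.1), decide (n ∈ p.2))) = p := by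
          apply Prod.ext <;> · ext n; simp [toCondF]
        have hx : SplitCond 𝒜 (toCondF (fun n => (decide (n ∈ p.1), decide (n ∈ p.2)))) := by
          rw [hxp]; exact hp
        have : (⟨_, hx⟩ : X) ∈ ⋃ n, C n := by rw [hCu]; trivial
        obtain ⟨n, hn⟩ := Set.mem_iUnion.1 this
        exact ⟨n, ⟨_, hx⟩, hn, hxp⟩
    · intro n F hF
      have hmem : ∀ p ∈ F, ∃ y : X, y ∈ C n ∧ toCondF y.1 = p := by
        intro p hp
        obtain ⟨y, hy, hyp⟩ := hF hp
        exact ⟨y, hy, hyp⟩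
      choose y hyC hyp using hmem
      refine exists_lower_bound (fun p hp => (hyp p hp) ▸ (y p hp).2) ?_
      intro p hp q hq
      by_cases hpq : p = q
      · subst hpq
        exact ((hyp p hp) ▸ (y p hp).2).1
      · have hxy : y p hp ≠ y q hq := by
          intro h
          apply hpq
          rw [← hyp p hp, ← hyp q hq, h]
        have hnK := hC n _ (hyC p hp) _ (hyC q hq) hxy
        rw [Set.eq_empty_iff_forall_notMem]
        rintro m ⟨hm1, hm2⟩
        apply hnK
        refine ⟨m, Or.inl ⟨?_, ?_⟩⟩
        · rw [← hyp p hp] at hm1; exact hm1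
        · rw [← hyp q hq] at hm2; exact hm2
end

section
/- Let 𝒜 be an a.d.-family and κ an uncountable cardinal. The following are equivalent: (1) ℙ_𝒜 admits an antichain of cardinality κ; (2) the unit sphere of (X_𝒜, ‖·‖∞) admits a 2-equilateral set of cardinality κ; (3) the unit sphere of (X_𝒜, ‖·‖∞) admits an r-equilateral set of cardinality κ for some r > 1; (4) the unit sphere of (X_𝒜, ‖·‖∞) admits a (1+ε)-separated set of cardinality κ for some ε > 0. -/
/-
A condition `p = (A, B)` of `ℙ_𝒜` gives the vector `1_A - 1_B` of `X_𝒜`. Two conditions are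
incompatible exactly when `A_p ∩ B_q` or `A_q ∩ B_p` is nonempty, which puts their vectors at
distance `2`; so an antichain yields a `2`-equilateral subset of the sphere.

Conversely, every `x ∈ X_𝒜` converges along each `A ∈ 𝒜` to a limit
`λ_x(A) = limAlong x A`, and for each `s > 0` only finitely many `A` have `|λ_x(A)| ≥ s`.
For a level `t > 0` avoiding the countably many values `|λ_x(A)|`, the sets `{x > t}` and
`{x < -t}` are then almost equal to finite unions of members of `𝒜`, so they form a condition.
If `‖x - y‖ ≥ 1 + ε` and both levels are below `ε / 2`, some coordinate has `x` above its level
and `y` below minus its level (or vice versa), which makes the two conditions incompatible.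
-/

open Set Filter Cardinal

open Topology

noncomputable section

lemma indicatorLinfty_apply (A : Set ℕ) (n : ℕ) : indicatorLinfty A n = A.indicator 1 n := by
  classical
  simp [indicatorLinfty, Set.indicator_apply]

lemma abs_apply_le_norm (x : Linfty) (n : ℕ) : |x n| ≤ ‖x‖ :=
  lp.norm_apply_le_norm ENNReal.top_ne_zero x n

lemma abs_apply_sub_le_norm (x y : Linfty) (n : ℕ) : |x n - y n| ≤ ‖x - y‖ := by
  simpa using abs_apply_le_norm (x - y) n

lemma norm_le_of_forall_abs_apply_le {x : Linfty} {C : ℝ} (hC : 0 ≤ C) (h : ∀ n, |x n| ≤ C) :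
    ‖x‖ ≤ C :=
  lp.norm_le_of_forall_le hC h

lemma exists_lt_abs_apply_of_lt_norm {x : Linfty} {r : ℝ} (h : r < ‖x‖) : ∃ n, r < |x n| := by
  by_contra! hle
  exact h.not_ge (norm_le_of_forall_abs_apply_le ((abs_nonneg (x 0)).trans (hle 0)) hle)

lemma mem_c0Set_of_finite {x : Linfty} (h : {n | x n ≠ 0}.Finite) : x ∈ c0Set := by
  have hev : ∀ᶠ n in cofinite, x n = 0 := by simpa [Filter.eventually_cofinite] using h
  rw [Nat.cofinite_eq_atTop] at hev
  exact tendsto_const_nhds.congr' (hev.mono fun _ hn => hn.symm)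

section Conditions

variable {𝒜 : Set (Set ℕ)} {p q : Set ℕ × Set ℕ}

lemma SplitCond.disjoint (hp : SplitCond 𝒜 p) : Disjoint p.1 p.2 :=
  Set.disjoint_iff_inter_eq_empty.2 hp.1

lemma compat_self (hp : SplitCond 𝒜 p) : Compat 𝒜 p p :=
  ⟨p, hp, ⟨subset_rfl, subset_rfl⟩, ⟨subset_rfl, subset_rfl⟩⟩

lemma Compat.disjoint (h : Compat 𝒜 p q) : Disjoint (p.1 ∪ q.1) (p.2 ∪ q.2) := by
  obtain ⟨r, hr, hrp, hrq⟩ := h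
  exact hr.disjoint.mono (union_subset hrp.1 hrq.1) (union_subset hrp.2 hrq.2)

lemma eqStar_union {A A' B B' : Set ℕ} (hA : eqStar A A') (hB : eqStar B B') :
    eqStar (A ∪ B) (A' ∪ B') := by
  refine (hA.union hB).subset fun n hn => ?_
  simp only [Set.mem_symmDiff, Set.mem_union] at hn ⊢
  tauto

lemma compat_of_disjoint (hp : SplitCond 𝒜 p) (hq : SplitCond 𝒜 q)
    (h : Disjoint (p.1 ∪ q.1) (p.2 ∪ q.2)) : Compat 𝒜 p q := by
  obtain ⟨-, ap, bp, hap, hbp, h1p, h2p⟩ := hp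
  obtain ⟨-, aq, bq, haq, hbq, h1q, h2q⟩ := hq
  refine ⟨(p.1 ∪ q.1, p.2 ∪ q.2), ⟨Set.disjoint_iff_inter_eq_empty.1 h, ap ∪ aq, bp ∪ bq,
    ?_, ?_, ?_, ?_⟩, ⟨subset_union_left, subset_union_left⟩,
    ⟨subset_union_right, subset_union_right⟩⟩
  · simpa using union_subset hap haq
  · simpa using union_subset hbp hbq
  · rw [Finset.set_biUnion_union]; exact eqStar_union h1p h1q
  · rw [Finset.set_biUnion_union]; exact eqStar_union h2p h2q

end Conditions

abbrev spanXA (𝒜 : Set (Set ℕ)) : Submodule ℝ Linfty :=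
  Submodule.span ℝ (c0Set ∪ indicatorLinfty '' 𝒜)

lemma spanXA_le_XA (𝒜 : Set (Set ℕ)) : spanXA 𝒜 ≤ XA 𝒜 :=
  Submodule.le_topologicalClosure _

lemma exists_spanXA_norm_sub_lt {𝒜 : Set (Set ℕ)} {x : Linfty} (hx : x ∈ XA 𝒜) {δ : ℝ}
    (hδ : 0 < δ) : ∃ y ∈ spanXA 𝒜, ‖x - y‖ < δ := by
  rw [XA, ← SetLike.mem_coe, Submodule.topologicalClosure_coe] at hx
  obtain ⟨y, hy, hxy⟩ := Metric.mem_closure_iff.1 hx δ hδ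
  exact ⟨y, hy, by rwa [dist_eq_norm] at hxy⟩

lemma ADFamily.finite_inter_biUnion {𝒜 : Set (Set ℕ)} (h𝒜 : ADFamily 𝒜) {A : Set ℕ}
    (hA : A ∈ 𝒜) {a : Finset (Set ℕ)} (ha : ↑a ⊆ 𝒜) (hAa : A ∉ a) :
    (A ∩ ⋃ B ∈ a, B).Finite := by
  rw [Set.inter_iUnion₂]
  exact a.finite_toSet.biUnion fun B hB => h𝒜.2.2 A hA B (ha hB) fun h => hAa (h ▸ hB)

section Indicators

lemma indicatorLinfty_union (A B : Set ℕ) :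
    indicatorLinfty (A ∪ B) =
      indicatorLinfty A + indicatorLinfty B - indicatorLinfty (A ∩ B) := by
  ext n
  simp only [lp.coeFn_sub, lp.coeFn_add, Pi.add_apply, Pi.sub_apply, indicatorLinfty_apply]
  by_cases hA : n ∈ A <;> by_cases hB : n ∈ B <;> simp [hA, hB]

lemma indicatorLinfty_mem_c0Set {A : Set ℕ} (hA : A.Finite) : indicatorLinfty A ∈ c0Set :=
  mem_c0Set_of_finite <| hA.subset fun n hn => by
    by_contra h
    simp [indicatorLinfty_apply, h] at hn

variable {𝒜 : Set (Set ℕ)}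

lemma indicatorLinfty_biUnion_mem_spanXA (h𝒜 : ADFamily 𝒜) (a : Finset (Set ℕ))
    (ha : ↑a ⊆ 𝒜) : indicatorLinfty (⋃ A ∈ a, A) ∈ spanXA 𝒜 := by
  classical
  induction a using Finset.induction_on with
  | empty =>
    have h0 : indicatorLinfty ∅ = 0 := by ext n; simp [indicatorLinfty_apply]
    simp [h0]
  | @insert A a hAa ih =>
    have hA : A ∈ 𝒜 := ha (by simp)
    have ha' : ↑a ⊆ 𝒜 := fun B hB => ha (by simp [hB])
    have hc0 := indicatorLinfty_mem_c0Set (h𝒜.finite_inter_biUnion hA ha' hAa)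
    rw [Finset.set_biUnion_insert, indicatorLinfty_union]
    exact Submodule.sub_mem _
      (Submodule.add_mem _ (Submodule.subset_span (Or.inr ⟨A, hA, rfl⟩)) (ih ha'))
      (Submodule.subset_span (Or.inl hc0))

lemma indicatorLinfty_mem_XA (h𝒜 : ADFamily 𝒜) {A : Set ℕ} {a : Finset (Set ℕ)}
    (ha : ↑a ⊆ 𝒜) (hA : eqStar A (⋃ B ∈ a, B)) : indicatorLinfty A ∈ XA 𝒜 := by
  have hc0 : indicatorLinfty A - indicatorLinfty (⋃ B ∈ a, B) ∈ c0Set :=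
    mem_c0Set_of_finite <| hA.subset fun n hn => by
      by_contra h
      simp only [Set.mem_symmDiff, not_or, not_and, not_not] at h
      simp only [Set.mem_ofPred_eq, lp.coeFn_sub, Pi.sub_apply, indicatorLinfty_apply] at hn
      by_cases hnA : n ∈ A <;> simp_all
  rw [← sub_add_cancel (indicatorLinfty A) (indicatorLinfty (⋃ B ∈ a, B))]
  exact spanXA_le_XA 𝒜 (Submodule.add_mem _ (Submodule.subset_span (Or.inl hc0))
    (indicatorLinfty_biUnion_mem_spanXA h𝒜 a ha))

end Indicators

def condVec (p : Set ℕ × Set ℕ) : Linfty := indicatorLinfty p.1 - indicatorLinfty p.2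

section CondVec

variable {𝒜 : Set (Set ℕ)} {p q : Set ℕ × Set ℕ} {n : ℕ}

lemma condVec_apply (p : Set ℕ × Set ℕ) (n : ℕ) :
    condVec p n = p.1.indicator 1 n - p.2.indicator 1 n := by
  simp [condVec, indicatorLinfty_apply]

lemma condVec_apply_of_mem_fst (hp : Disjoint p.1 p.2) (hn : n ∈ p.1) : condVec p n = 1 := by
  simp [condVec_apply, hn, hp.notMem_of_mem_left hn]

lemma condVec_apply_of_mem_snd (hp : Disjoint p.1 p.2) (hn : n ∈ p.2) : condVec p n = -1 := by
  simp [condVec_apply, hn, hp.notMem_of_mem_right hn]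

lemma abs_condVec_apply_le (p : Set ℕ × Set ℕ) (n : ℕ) : |condVec p n| ≤ 1 := by
  rw [condVec_apply]
  by_cases h1 : n ∈ p.1 <;> by_cases h2 : n ∈ p.2 <;> simp [h1, h2]

lemma norm_condVec_le_one (p : Set ℕ × Set ℕ) : ‖condVec p‖ ≤ 1 :=
  norm_le_of_forall_abs_apply_le zero_le_one (abs_condVec_apply_le p)

lemma norm_condVec_sub_condVec (hp : SplitCond 𝒜 p) (hq : SplitCond 𝒜 q)
    (h : ¬Compat 𝒜 p q) : ‖condVec p - condVec q‖ = 2 := by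
  refine le_antisymm ((norm_sub_le _ _).trans ?_) ?_
  · linarith [norm_condVec_le_one p, norm_condVec_le_one q]
  obtain ⟨n, hn1, hn2⟩ := Set.not_disjoint_iff.1 (mt (compat_of_disjoint hp hq) h)
  refine le_trans (le_of_eq ?_) (abs_apply_le_norm _ n)
  rw [lp.coeFn_sub, Pi.sub_apply]
  rcases hn1 with hn1 | hn1 <;> rcases hn2 with hn2 | hn2
  · exact absurd hn2 (hp.disjoint.notMem_of_mem_left hn1)
  · rw [condVec_apply_of_mem_fst hp.disjoint hn1, condVec_apply_of_mem_snd hq.disjoint hn2]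
    norm_num
  · rw [condVec_apply_of_mem_snd hp.disjoint hn2, condVec_apply_of_mem_fst hq.disjoint hn1]
    norm_num
  · exact absurd hn2 (hq.disjoint.notMem_of_mem_left hn1)

lemma condVec_mem_XA (h𝒜 : ADFamily 𝒜) (hp : SplitCond 𝒜 p) : condVec p ∈ XA 𝒜 := by
  obtain ⟨-, a, b, ha, hb, h1, h2⟩ := hp
  exact Submodule.sub_mem _ (indicatorLinfty_mem_XA h𝒜 ha h1) (indicatorLinfty_mem_XA h𝒜 hb h2)

end CondVec

lemma exists_equilateral_of_antichain {𝒜 : Set (Set ℕ)} (h𝒜 : ADFamily 𝒜) {κ : Cardinal}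
    (hκ : ℵ₀ < κ) {P : Set (Set ℕ × Set ℕ)} (hP : SplitAntichain 𝒜 P) (hPκ : #P = κ) :
    ∃ S : Set Linfty, S ⊆ sphereInf 𝒜 ∧ #S = κ ∧ ∀ x ∈ S, ∀ y ∈ S, x ≠ y → ‖x - y‖ = 2 := by
  obtain ⟨hcond, hinc⟩ := hP
  have hdist : ∀ p ∈ P, ∀ q ∈ P, p ≠ q → ‖condVec p - condVec q‖ = 2 := fun p hp q hq hpq =>
    norm_condVec_sub_condVec (hcond p hp) (hcond q hq) (hinc p hp q hq hpq)
  have hinj : InjOn condVec P := fun p hp q hq hpq => by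
    by_contra hne
    simpa [hpq] using hdist p hp q hq hne
  refine ⟨condVec '' P, ?_, by rw [Cardinal.mk_image_eq_of_injOn _ _ hinj, hPκ], ?_⟩
  · rintro _ ⟨p, hp, rfl⟩
    obtain ⟨q, hq, hqp⟩ : (P \ {p}).Nonempty := by
      by_contra! h
      refine hκ.not_ge (hPκ ▸ Cardinal.mk_le_aleph0_iff.2 ?_)
      exact ((countable_singleton p).mono (sdiff_eq_empty.1 h)).to_subtype
    -- `2 = ‖condVec p - condVec q‖ ≤ ‖condVec p‖ + 1` forces `‖condVec p‖ = 1`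
    refine ⟨condVec_mem_XA h𝒜 (hcond p hp), le_antisymm (norm_condVec_le_one p) ?_⟩
    linarith [hdist p hp q hq (Ne.symm hqp), norm_sub_le (condVec p) (condVec q),
      norm_condVec_le_one q]
  · rintro _ ⟨p, hp, rfl⟩ _ ⟨q, hq, rfl⟩ hne
    exact hdist p hp q hq fun h => hne (h ▸ rfl)

def along (A : Set ℕ) : Filter ℕ := cofinite ⊓ 𝓟 A

lemma eventually_along_iff {A : Set ℕ} {P : ℕ → Prop} :
    (∀ᶠ n in along A, P n) ↔ {n | n ∈ A ∧ ¬P n}.Finite := by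
  simp only [along, eventually_inf_principal, eventually_cofinite, Classical.not_imp]

lemma along_neBot {A : Set ℕ} (hA : A.Infinite) : (along A).NeBot :=
  frequently_iff_neBot.1 (frequently_cofinite_iff_infinite.2 hA)

lemma along_mono {A B : Set ℕ} (h : A ⊆ B) : along A ≤ along B :=
  inf_le_inf_left _ (principal_mono.2 h)

lemma along_le_along_of_eventually {A B : Set ℕ} (h : ∀ᶠ n in along A, n ∈ B) :
    along A ≤ along B :=
  le_inf inf_le_left (le_principal_iff.2 h)

lemma tendsto_along_of_mem_c0Set {c : Linfty} (hc : c ∈ c0Set) (A : Set ℕ) :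
    Tendsto c (along A) (𝓝 0) :=
  hc.mono_left (Nat.cofinite_eq_atTop ▸ inf_le_left)

lemma exists_tendsto_of_forall_eventually_dist_lt {α E : Type*} [MetricSpace E]
    [CompleteSpace E] {L : Filter α} {f : α → E}
    (h : ∀ ε > 0, ∃ c, ∀ᶠ a in L, dist (f a) c < ε) : ∃ l, Tendsto f L (𝓝 l) := by
  rcases L.eq_or_neBot with rfl | hL
  · exact ⟨(h 1 one_pos).choose, tendsto_bot⟩
  refine CompleteSpace.complete (Metric.cauchy_iff.2 ⟨map_neBot, fun ε hε => ?_⟩)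
  obtain ⟨c, hc⟩ := h (ε / 2) (half_pos hε)
  refine ⟨f '' {a | dist (f a) c < ε / 2}, image_mem_map hc, ?_⟩
  rintro _ ⟨a, ha, rfl⟩ _ ⟨b, hb, rfl⟩
  linarith [dist_triangle_right (f a) (f b) c, ha.out, hb.out]

section Span

variable {𝒜 : Set (Set ℕ)} {y : Linfty}

lemma spanXA_exists_tendsto_along (h𝒜 : ADFamily 𝒜) (hy : y ∈ spanXA 𝒜) {A : Set ℕ}
    (hA : A ∈ 𝒜) : ∃ l, Tendsto y (along A) (𝓝 l) := by
  induction hy using Submodule.span_induction with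
  | mem z hz =>
    rcases hz with hz | ⟨B, hB, rfl⟩
    · exact ⟨0, tendsto_along_of_mem_c0Set hz A⟩
    by_cases hBA : B = A
    · subst hBA
      refine ⟨1, tendsto_const_nhds.congr' ?_⟩
      filter_upwards [mem_inf_of_right (mem_principal_self B)] with n hn
      simp [indicatorLinfty_apply, hn]
    · refine ⟨0, tendsto_const_nhds.congr' ?_⟩
      refine eventually_along_iff.2 ((h𝒜.2.2 A hA B hB (Ne.symm hBA)).subset ?_)
      rintro n ⟨hnA, hn⟩
      refine ⟨hnA, by_contra fun hnB => hn ?_⟩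
      simp [indicatorLinfty_apply, hnB]
  | zero => exact ⟨0, by rw [lp.coeFn_zero]; exact tendsto_const_nhds⟩
  | add z w _ _ hz hw =>
    obtain ⟨l, hl⟩ := hz
    obtain ⟨m, hm⟩ := hw
    exact ⟨l + m, by rw [lp.coeFn_add]; exact hl.add hm⟩
  | smul a z _ hz =>
    obtain ⟨l, hl⟩ := hz
    exact ⟨a • l, by rw [lp.coeFn_smul]; exact hl.const_smul a⟩

lemma spanXA_exists_finset_tendsto_zero (hy : y ∈ spanXA 𝒜) :
    ∃ F : Finset (Set ℕ), ↑F ⊆ 𝒜 ∧ Tendsto y (along (⋃ A ∈ F, A)ᶜ) (𝓝 0) := by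
  classical
  induction hy using Submodule.span_induction with
  | mem z hz =>
    rcases hz with hz | ⟨B, hB, rfl⟩
    · exact ⟨∅, by simp, tendsto_along_of_mem_c0Set hz _⟩
    refine ⟨{B}, by simpa using hB, tendsto_const_nhds.congr' ?_⟩
    filter_upwards [mem_inf_of_right (mem_principal_self _)] with n hn
    simp_all [indicatorLinfty_apply]
  | zero => exact ⟨∅, by simp, by rw [lp.coeFn_zero]; exact tendsto_const_nhds⟩
  | add z w _ _ hz hw =>
    obtain ⟨F, hF, hFz⟩ := hz
    obtain ⟨G, hG, hGw⟩ := hw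
    refine ⟨F ∪ G, by simpa using union_subset hF hG, ?_⟩
    have hsub : ∀ H ⊆ F ∪ G, (⋃ A ∈ F ∪ G, A)ᶜ ⊆ (⋃ A ∈ H, A)ᶜ := fun H hH =>
      compl_subset_compl.2 fun n hn => by
        obtain ⟨A, hA, hnA⟩ := mem_iUnion₂.1 hn
        exact mem_iUnion₂.2 ⟨A, hH hA, hnA⟩
    rw [lp.coeFn_add, ← add_zero 0]
    exact (hFz.mono_left (along_mono (hsub F Finset.subset_union_left))).add
      (hGw.mono_left (along_mono (hsub G Finset.subset_union_right)))
  | smul a z _ hz =>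
    obtain ⟨F, hF, hFz⟩ := hz
    exact ⟨F, hF, by rw [lp.coeFn_smul, ← smul_zero a]; exact hFz.const_smul a⟩

end Span

def limAlong (x : Linfty) (A : Set ℕ) : ℝ := limUnder (along A) x

section Limits

variable {𝒜 : Set (Set ℕ)} {x : Linfty}

lemma XA_exists_tendsto_along (h𝒜 : ADFamily 𝒜) (hx : x ∈ XA 𝒜) {A : Set ℕ} (hA : A ∈ 𝒜) :
    ∃ l, Tendsto x (along A) (𝓝 l) := by
  refine exists_tendsto_of_forall_eventually_dist_lt fun ε hε => ?_
  obtain ⟨y, hy, hxy⟩ := exists_spanXA_norm_sub_lt hx (half_pos hε)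
  obtain ⟨l, hl⟩ := spanXA_exists_tendsto_along h𝒜 hy hA
  refine ⟨l, (Metric.tendsto_nhds.1 hl (ε / 2) (half_pos hε)).mono fun n hn => ?_⟩
  rw [Real.dist_eq] at hn ⊢
  linarith [abs_sub_le (x n) (y n) l, abs_apply_sub_le_norm x y n]

lemma tendsto_limAlong (h𝒜 : ADFamily 𝒜) (hx : x ∈ XA 𝒜) {A : Set ℕ} (hA : A ∈ 𝒜) :
    Tendsto x (along A) (𝓝 (limAlong x A)) :=
  tendsto_nhds_limUnder (XA_exists_tendsto_along h𝒜 hx hA)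

lemma limAlong_neg (h𝒜 : ADFamily 𝒜) (hx : x ∈ XA 𝒜) {A : Set ℕ} (hA : A ∈ 𝒜) :
    limAlong (-x) A = -limAlong x A := by
  have := along_neBot (h𝒜.2.1 A hA)
  have hneg : Tendsto (⇑(-x)) (along A) (𝓝 (-limAlong x A)) := by
    rw [lp.coeFn_neg]; exact (tendsto_limAlong h𝒜 hx hA).neg
  exact hneg.limUnder_eq

lemma XA_exists_finset_eventually_abs_lt (hx : x ∈ XA 𝒜) {s : ℝ} (hs : 0 < s) :
    ∃ F : Finset (Set ℕ), ↑F ⊆ 𝒜 ∧ ∀ᶠ n in along (⋃ A ∈ F, A)ᶜ, |x n| < s := by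
  obtain ⟨y, hy, hxy⟩ := exists_spanXA_norm_sub_lt hx (half_pos hs)
  obtain ⟨F, hF, hy0⟩ := spanXA_exists_finset_tendsto_zero hy
  refine ⟨F, hF, (Metric.tendsto_nhds.1 hy0 (s / 2) (half_pos hs)).mono fun n hn => ?_⟩
  rw [Real.dist_eq, sub_zero] at hn
  linarith [abs_sub_abs_le_abs_sub (x n) (y n), abs_apply_sub_le_norm x y n]

lemma finite_setOf_le_abs_limAlong (h𝒜 : ADFamily 𝒜) (hx : x ∈ XA 𝒜) {s : ℝ} (hs : 0 < s) :
    {A | A ∈ 𝒜 ∧ s ≤ |limAlong x A|}.Finite := by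
  obtain ⟨F, hF, hFx⟩ := XA_exists_finset_eventually_abs_lt hx (half_pos hs)
  refine F.finite_toSet.subset fun A ⟨hA, hsA⟩ => ?_
  by_contra hAF
  have := along_neBot (h𝒜.2.1 A hA)
  have hAout : ∀ᶠ n in along A, n ∈ (⋃ B ∈ F, B)ᶜ :=
    eventually_along_iff.2 <| (h𝒜.finite_inter_biUnion hA hF hAF).subset
      fun n ⟨hnA, hn⟩ => ⟨hnA, not_not.1 hn⟩
  have hsmall : ∀ᶠ n in along A, |x n| < s / 2 := along_le_along_of_eventually hAout hFx
  have := le_of_tendsto (tendsto_limAlong h𝒜 hx hA).abs (hsmall.mono fun _ h => h.le)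
  linarith

lemma exists_forall_abs_limAlong_ne (h𝒜 : ADFamily 𝒜) (hx : x ∈ XA 𝒜) {ε : ℝ} (hε : 0 < ε) :
    ∃ t ∈ Ioo 0 ε, ∀ A ∈ 𝒜, |limAlong x A| ≠ t := by
  set V := ⋃ m : ℕ,
    (fun A => |limAlong x A|) '' {A | A ∈ 𝒜 ∧ 1 / ((m : ℝ) + 1) ≤ |limAlong x A|}
  have hV : V.Countable := countable_iUnion fun m =>
    ((finite_setOf_le_abs_limAlong h𝒜 hx (by positivity)).image _).countable
  have hIoo : ¬(Ioo 0 ε).Countable := by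
    rw [← countable_coe_iff, ← Cardinal.mk_le_aleph0_iff, Cardinal.mk_Ioo_real hε]
    exact Cardinal.aleph0_lt_continuum.not_ge
  obtain ⟨t, ht, htV⟩ : (Ioo 0 ε \ V).Nonempty :=
    nonempty_iff_ne_empty.2 fun h => hIoo (hV.mono (sdiff_eq_empty.1 h))
  refine ⟨t, ht, fun A hA hAt => htV ?_⟩
  obtain ⟨m, hm⟩ := exists_nat_one_div_lt ht.1
  exact mem_iUnion.2 ⟨m, A, ⟨hA, hAt ▸ hm.le⟩, hAt⟩

lemma exists_eqStar_setOf_lt (h𝒜 : ADFamily 𝒜) (hx : x ∈ XA 𝒜) {t : ℝ} (ht : 0 < t)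
    (hgood : ∀ A ∈ 𝒜, limAlong x A ≠ t) :
    ∃ F : Finset (Set ℕ), ↑F ⊆ 𝒜 ∧ eqStar {n | t < x n} (⋃ A ∈ F, A) := by
  have hfin : {A | A ∈ 𝒜 ∧ t < limAlong x A}.Finite :=
    (finite_setOf_le_abs_limAlong h𝒜 hx ht).subset fun A hA =>
      ⟨hA.1, hA.2.le.trans (le_abs_self _)⟩
  refine ⟨hfin.toFinset, fun A hA => (hfin.mem_toFinset.1 hA).1, ?_⟩
  set U := ⋃ A ∈ hfin.toFinset, A
  have hU : ∀ A ∈ 𝒜, A ⊆ U ∨ limAlong x A < t := fun A hA =>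
    (hgood A hA).lt_or_gt.symm.imp
      (fun h => subset_biUnion_of_mem (u := id) (hfin.mem_toFinset.2 ⟨hA, h⟩)) id
  rw [eqStar, Set.symmDiff_def]
  refine Finite.union ?_ ?_
  · -- off a finite union `⋃ G` the sequence is eventually below `t`; on each `B ∈ G` outside `U`
    -- it is eventually below `t` because `limAlong x B < t`
    obtain ⟨G, hG, hGx⟩ := XA_exists_finset_eventually_abs_lt hx ht
    have hpiece : ∀ B ∈ G, ({n | t < x n} \ U ∩ B).Finite := fun B hB => by
      rcases hU B (hG hB) with hBU | hlt
      · exact finite_empty.subset fun n hn => hn.1.2 (hBU hn.2)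
      · exact (eventually_along_iff.1 ((tendsto_order.1
          (tendsto_limAlong h𝒜 hx (hG hB))).2 t hlt)).subset
          fun n hn => ⟨hn.2, not_lt.2 hn.1.1.out.le⟩
    refine ((eventually_along_iff.1 hGx).union (G.finite_toSet.biUnion hpiece)).subset
      fun n hn => ?_
    by_cases hnG : n ∈ ⋃ B ∈ G, B
    · obtain ⟨B, hB, hnB⟩ := mem_iUnion₂.1 hnG
      exact Or.inr (mem_iUnion₂.2 ⟨B, hB, hn, hnB⟩)
    · exact Or.inl ⟨hnG, not_lt.2 (hn.1.out.le.trans (le_abs_self _))⟩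
  · refine (hfin.toFinset.finite_toSet.biUnion fun A hA => eventually_along_iff.1
      ((tendsto_order.1 (tendsto_limAlong h𝒜 hx (hfin.mem_toFinset.1 hA).1)).1 t
        (hfin.mem_toFinset.1 hA).2)).subset fun n ⟨hnU, hnD⟩ => ?_
    obtain ⟨A, hA, hnA⟩ := mem_iUnion₂.1 hnU
    exact mem_iUnion₂.2 ⟨A, hA, hnA, hnD⟩

lemma splitCond_levelSets (h𝒜 : ADFamily 𝒜) (hx : x ∈ XA 𝒜) {t : ℝ} (ht : 0 < t)
    (hgood : ∀ A ∈ 𝒜, |limAlong x A| ≠ t) :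
    SplitCond 𝒜 ({n | t < x n}, {n | x n < -t}) := by
  refine ⟨Set.disjoint_iff_inter_eq_empty.1 (Set.disjoint_left.2 fun n h1 h2 =>
    (h1.out.trans h2.out).not_ge (by linarith)), ?_⟩
  obtain ⟨a, ha, h1⟩ := exists_eqStar_setOf_lt h𝒜 hx ht fun A hA h =>
    hgood A hA (by rw [h, abs_of_pos ht])
  obtain ⟨b, hb, h2⟩ := exists_eqStar_setOf_lt h𝒜 (neg_mem hx) ht fun A hA h =>
    hgood A hA (by rw [← neg_neg (limAlong x A), ← limAlong_neg h𝒜 hx hA, h, abs_neg,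
      abs_of_pos ht])
  have hneg : {n | t < (-x) n} = {n | x n < -t} := by
    ext n
    simp only [Set.mem_ofPred_eq, lp.coeFn_neg, Pi.neg_apply]
    constructor <;> intro h <;> linarith
  exact ⟨a, b, ha, hb, h1, hneg ▸ h2⟩

end Limits

lemma exists_antichain_of_separated {𝒜 : Set (Set ℕ)} (h𝒜 : ADFamily 𝒜) {ε : ℝ}
    (hε : 0 < ε) {S : Set Linfty} (hS : S ⊆ sphereInf 𝒜)
    (hsep : ∀ x ∈ S, ∀ y ∈ S, x ≠ y → 1 + ε ≤ ‖x - y‖) :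
    ∃ P : Set (Set ℕ × Set ℕ), SplitAntichain 𝒜 P ∧ #P = #S := by
  have hlevel : ∀ x ∈ S, ∃ t ∈ Ioo 0 (ε / 2), ∀ A ∈ 𝒜, |limAlong x A| ≠ t := fun x hx =>
    exists_forall_abs_limAlong_ne h𝒜 (hS hx).1 (half_pos hε)
  choose! T hT hTgood using hlevel
  set Φ : Linfty → Set ℕ × Set ℕ := fun x => ({n | T x < x n}, {n | x n < -T x})
  have hcond : ∀ x ∈ S, SplitCond 𝒜 (Φ x) := fun x hx =>
    splitCond_levelSets h𝒜 (hS hx).1 (hT x hx).1 (hTgood x hx)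
  have hinc : ∀ x ∈ S, ∀ y ∈ S, x ≠ y → ¬Compat 𝒜 (Φ x) (Φ y) := by
    intro x hx y hy hxy hc
    obtain ⟨n, hn⟩ := exists_lt_abs_apply_of_lt_norm
      ((show 1 + ε / 2 < 1 + ε by linarith).trans_le (hsep x hx y hy hxy))
    rw [lp.coeFn_sub, Pi.sub_apply] at hn
    obtain ⟨hx₁, hx₂⟩ := abs_le.1 ((abs_apply_le_norm x n).trans (hS hx).2.le)
    obtain ⟨hy₁, hy₂⟩ := abs_le.1 ((abs_apply_le_norm y n).trans (hS hy).2.le)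
    obtain ⟨-, hTx⟩ := hT x hx
    obtain ⟨-, hTy⟩ := hT y hy
    rcases le_or_gt 0 (x n - y n) with hpos | hneg
    · rw [abs_of_nonneg hpos] at hn
      exact Set.disjoint_left.1 hc.disjoint (Or.inl (show T x < x n by linarith))
        (Or.inr (show y n < -T y by linarith))
    · rw [abs_of_neg hneg] at hn
      exact Set.disjoint_left.1 hc.disjoint (Or.inr (show T y < y n by linarith))
        (Or.inl (show x n < -T x by linarith))
  have hinj : InjOn Φ S := fun x hx y hy hxy => by
    by_contra hne
    exact hinc x hx y hy hne (by rw [← hxy]; exact compat_self (hcond x hx))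
  refine ⟨Φ '' S, ⟨?_, ?_⟩, Cardinal.mk_image_eq_of_injOn _ _ hinj⟩
  · rintro _ ⟨x, hx, rfl⟩
    exact hcond x hx
  · rintro _ ⟨x, hx, rfl⟩ _ ⟨y, hy, rfl⟩ hne
    exact hinc x hx y hy fun h => hne (h ▸ rfl)

end

/-- for an a.d.-family `𝒜` and an uncountable cardinal `κ`, the existence
of an antichain of `ℙ_𝒜` of cardinality `κ` is equivalent to the existence in the unit
sphere of `(X_𝒜, ‖·‖∞)` of a `2`-equilateral set of cardinality `κ`, of an `r`-equilateral
set of cardinality `κ` for some `r > 1`, and of a `(1+ε)`-separated set of cardinality `κ`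
for some `ε > 0`. -/
theorem statement14 (𝒜 : Set (Set ℕ)) (h𝒜 : ADFamily 𝒜) (κ : Cardinal.{0})
    (hκ : Cardinal.aleph0 < κ) :
    ((∃ P : Set (Set ℕ × Set ℕ), SplitAntichain 𝒜 P ∧ Cardinal.mk P = κ) ↔
      (∃ S : Set Linfty, S ⊆ sphereInf 𝒜 ∧ Cardinal.mk S = κ ∧
        ∀ x ∈ S, ∀ y ∈ S, x ≠ y → ‖x - y‖ = 2)) ∧
    ((∃ P : Set (Set ℕ × Set ℕ), SplitAntichain 𝒜 P ∧ Cardinal.mk P = κ) ↔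
      (∃ r : ℝ, 1 < r ∧ ∃ S : Set Linfty, S ⊆ sphereInf 𝒜 ∧ Cardinal.mk S = κ ∧
        ∀ x ∈ S, ∀ y ∈ S, x ≠ y → ‖x - y‖ = r)) ∧
    ((∃ P : Set (Set ℕ × Set ℕ), SplitAntichain 𝒜 P ∧ Cardinal.mk P = κ) ↔
      (∃ ε : ℝ, 0 < ε ∧ ∃ S : Set Linfty, S ⊆ sphereInf 𝒜 ∧ Cardinal.mk S = κ ∧
        ∀ x ∈ S, ∀ y ∈ S, x ≠ y → 1 + ε ≤ ‖x - y‖)) := by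
  have h41 : ∀ {ε : ℝ} {S : Set Linfty}, 0 < ε → S ⊆ sphereInf 𝒜 → #S = κ →
      (∀ x ∈ S, ∀ y ∈ S, x ≠ y → 1 + ε ≤ ‖x - y‖) →
      ∃ P : Set (Set ℕ × Set ℕ), SplitAntichain 𝒜 P ∧ #P = κ :=
    fun hε hS hSκ hsep => hSκ ▸ exists_antichain_of_separated h𝒜 hε hS hsep
  refine ⟨⟨fun ⟨P, hP, hPκ⟩ => exists_equilateral_of_antichain h𝒜 hκ hP hPκ, ?_⟩,
    ⟨fun ⟨P, hP, hPκ⟩ => ⟨2, one_lt_two, exists_equilateral_of_antichain h𝒜 hκ hP hPκ⟩, ?_⟩,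
    ⟨fun ⟨P, hP, hPκ⟩ => ⟨1, one_pos, ?_⟩,
      fun ⟨ε, hε, S, hS, hSκ, hsep⟩ => h41 hε hS hSκ hsep⟩⟩
  · rintro ⟨S, hS, hSκ, hS2⟩
    exact h41 one_pos hS hSκ fun x hx y hy hxy => by rw [hS2 x hx y hy hxy]; norm_num
  · rintro ⟨r, hr, S, hS, hSκ, hSr⟩
    exact h41 (sub_pos.2 hr) hS hSκ fun x hx y hy hxy => by rw [hSr x hx y hy hxy]; linarith
  · obtain ⟨S, hS, hSκ, hS2⟩ := exists_equilateral_of_antichain h𝒜 hκ hP hPκ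
    exact ⟨S, hS, hSκ, fun x hx y hy hxy => by rw [hS2 x hx y hy hxy]; norm_num⟩
end
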